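/- arXiv:1106.4987 — 9 statements merged into one kernel-verified Lean document; each statement's English description precedes it below -/
import Mathlib

section
/- Let M ∈ ℝ^{m×d} with m < d, Ω ∈ ℝ^{p×d}, and let Λ ⊆ {1,…,p}. Let x₀ ∈ ℝ^d be a vector whose cosupport is exactly Λ, i.e., (Ωx₀)_i = 0 for every i ∈ Λ and (Ωx₀)_i ≠ 0 for every i ∉ Λ. Then x₀ is the unique minimizer of ‖Ωx‖₁ subject to Mx = Mx₀ (i.e., ‖Ωx₀‖₁ < ‖Ωx‖₁ for every x ≠ x₀ with Mx = Mx₀) if and only if for every nonzero z ∈ Null(M) one has |⟨Ω_{Λᶜ} z, sign(Ω_{Λᶜ} x₀)⟩| < ‖Ω_Λ z‖₁. -/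
/-!
Write `a = Ωx₀` and `b = Ωz`, so that `a` vanishes exactly on `Λ`. Since
`|a + b| ≥ |a| + b · sign a` with equality once `|b| < |a|`, we get `‖a + b‖₁ ≥ ‖a‖₁ + D(b)` for
`D(b) = ⟨b_{Λᶜ}, sign a_{Λᶜ}⟩ + ‖b_Λ‖₁`, with equality along all small positive multiples of `b`.
Hence `x₀` is the unique minimizer on `x₀ + Null(M)` iff `D(Ωz) > 0` for every nonzero
`z ∈ Null(M)`, and applying this to both `z` and `-z` gives the absolute value.
-/

open Matrix Finset Filter Topology

lemma abs_add_mul_sign_le_abs_add (a b : ℝ) : |a| + b * Real.sign a ≤ |a + b| := by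
  rcases lt_trichotomy a 0 with ha | rfl | ha
  · rw [Real.sign_of_neg ha, abs_of_neg ha]
    linarith [neg_le_abs (a + b)]
  · simp
  · rw [Real.sign_of_pos ha, abs_of_pos ha, mul_one]
    exact le_abs_self _

lemma abs_add_eq_abs_add_mul_sign {a b : ℝ} (h : |b| < |a|) : |a + b| = |a| + b * Real.sign a := by
  rcases lt_trichotomy a 0 with ha | rfl | ha
  · rw [abs_of_neg ha] at h
    rw [Real.sign_of_neg ha, abs_of_neg ha, abs_of_neg (by linarith [le_abs_self b])]
    ring
  · rw [abs_zero] at h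
    linarith [abs_nonneg b]
  · rw [abs_of_pos ha] at h
    rw [Real.sign_of_pos ha, abs_of_pos ha, abs_of_pos (by linarith [neg_abs_le b]), mul_one]

section DirectionalDerivative

variable {ι : Type*} [Fintype ι] [DecidableEq ι] {Λ : Finset ι} {a : ι → ℝ}

/-- When `Λ` is the zero set of `a`, this is the one-sided directional derivative of
`x ↦ ∑ i, |x i|` at `a` in the direction `b`. -/
noncomputable def l1DirDeriv (Λ : Finset ι) (a b : ι → ℝ) : ℝ :=
  ∑ i ∈ Λᶜ, b i * Real.sign (a i) + ∑ i ∈ Λ, |b i|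

lemma l1DirDeriv_smul {t : ℝ} (ht : 0 ≤ t) (b : ι → ℝ) :
    l1DirDeriv Λ a (t • b) = t * l1DirDeriv Λ a b := by
  simp only [l1DirDeriv, Pi.smul_apply, smul_eq_mul, abs_mul, abs_of_nonneg ht, mul_add,
    mul_sum, mul_assoc]

lemma l1DirDeriv_neg (b : ι → ℝ) :
    l1DirDeriv Λ a (-b) = -∑ i ∈ Λᶜ, b i * Real.sign (a i) + ∑ i ∈ Λ, |b i| := by
  simp [l1DirDeriv]

lemma sum_abs_add_eq_sum_compl_add_sum_abs (ha : ∀ i ∈ Λ, a i = 0) (b : ι → ℝ) :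
    ∑ i, |a i + b i| = ∑ i ∈ Λᶜ, |a i + b i| + ∑ i ∈ Λ, |b i| := by
  rw [← sum_add_sum_compl Λ, add_comm]
  congr 1
  exact sum_congr rfl fun i hi => by rw [ha i hi, zero_add]

lemma sum_abs_eq_sum_compl (ha : ∀ i ∈ Λ, a i = 0) : ∑ i, |a i| = ∑ i ∈ Λᶜ, |a i| := by
  simpa using sum_abs_add_eq_sum_compl_add_sum_abs ha 0

lemma sum_abs_add_l1DirDeriv_le (ha : ∀ i ∈ Λ, a i = 0) (b : ι → ℝ) :
    ∑ i, |a i| + l1DirDeriv Λ a b ≤ ∑ i, |a i + b i| := by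
  rw [sum_abs_add_eq_sum_compl_add_sum_abs ha, sum_abs_eq_sum_compl ha, l1DirDeriv, ← add_assoc,
    ← sum_add_distrib]
  gcongr with i
  exact abs_add_mul_sign_le_abs_add _ _

lemma sum_abs_add_eq_of_abs_lt (ha : ∀ i ∈ Λ, a i = 0) {b : ι → ℝ}
    (hb : ∀ i ∉ Λ, |b i| < |a i|) :
    ∑ i, |a i + b i| = ∑ i, |a i| + l1DirDeriv Λ a b := by
  rw [sum_abs_add_eq_sum_compl_add_sum_abs ha, sum_abs_eq_sum_compl ha, l1DirDeriv, ← add_assoc,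
    ← sum_add_distrib]
  congr 1
  exact sum_congr rfl fun i hi => abs_add_eq_abs_add_mul_sign (hb i (mem_compl.1 hi))

lemma exists_pos_forall_abs_mul_lt (ha : ∀ i ∉ Λ, a i ≠ 0) (b : ι → ℝ) :
    ∃ t > 0, ∀ i ∉ Λ, |t * b i| < |a i| := by
  have hsmall : ∀ᶠ t in 𝓝 (0 : ℝ), ∀ i ∉ Λ, |t * b i| < |a i| := by
    refine eventually_all.2 fun i => ?_
    by_cases hi : i ∈ Λ
    · exact .of_forall fun _ hi' => absurd hi hi'
    have hcont : Tendsto (fun t : ℝ => |t * b i|) (𝓝 0) (𝓝 0) := by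
      simpa using ((continuous_id.mul continuous_const).abs.tendsto (0 : ℝ))
    exact (hcont.eventually (gt_mem_nhds (abs_pos.2 (ha i hi)))).mono fun _ h _ => h
  exact ((hsmall.filter_mono (nhdsWithin_le_nhds (s := Set.Ioi 0))).and
    self_mem_nhdsWithin).exists.imp fun _ h => ⟨h.2, h.1⟩

lemma exists_pos_sum_abs_add_smul_eq (ha₀ : ∀ i ∈ Λ, a i = 0) (ha : ∀ i ∉ Λ, a i ≠ 0)
    (b : ι → ℝ) :
    ∃ t > 0, ∑ i, |a i + t * b i| = ∑ i, |a i| + t * l1DirDeriv Λ a b := by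
  obtain ⟨t, ht, hsmall⟩ := exists_pos_forall_abs_mul_lt ha b
  refine ⟨t, ht, ?_⟩
  rw [← l1DirDeriv_smul ht.le]
  exact sum_abs_add_eq_of_abs_lt ha₀ (b := t • b) hsmall

end DirectionalDerivative

section UniqueMinimizer

variable {m d p : ℕ} {M : Matrix (Fin m) (Fin d) ℝ} {Ω : Matrix (Fin p) (Fin d) ℝ}
  {Λ : Finset (Fin p)} {x₀ : Fin d → ℝ}

lemma l1DirDeriv_pos_of_isUniqueMin (hzero : ∀ i ∈ Λ, (Ω *ᵥ x₀) i = 0)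
    (hnonzero : ∀ i ∉ Λ, (Ω *ᵥ x₀) i ≠ 0)
    (hmin : ∀ x, x ≠ x₀ → M *ᵥ x = M *ᵥ x₀ → ∑ i, |(Ω *ᵥ x₀) i| < ∑ i, |(Ω *ᵥ x) i|)
    {z : Fin d → ℝ} (hMz : M *ᵥ z = 0) (hz : z ≠ 0) :
    0 < l1DirDeriv Λ (Ω *ᵥ x₀) (Ω *ᵥ z) := by
  obtain ⟨t, ht, hexp⟩ := exists_pos_sum_abs_add_smul_eq hzero hnonzero (Ω *ᵥ z)
  have hne : x₀ + t • z ≠ x₀ := by simpa [ht.ne'] using hz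
  have hlt := hmin (x₀ + t • z) hne (by simp [mulVec_add, mulVec_smul, hMz])
  simp only [mulVec_add, mulVec_smul, Pi.add_apply, Pi.smul_apply, smul_eq_mul, hexp] at hlt
  exact pos_of_mul_pos_right (by linarith) ht.le

lemma isUniqueMin_iff_l1DirDeriv_pos (hzero : ∀ i ∈ Λ, (Ω *ᵥ x₀) i = 0)
    (hnonzero : ∀ i ∉ Λ, (Ω *ᵥ x₀) i ≠ 0) :
    (∀ x, x ≠ x₀ → M *ᵥ x = M *ᵥ x₀ → ∑ i, |(Ω *ᵥ x₀) i| < ∑ i, |(Ω *ᵥ x) i|) ↔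
      ∀ z, M *ᵥ z = 0 → z ≠ 0 → 0 < l1DirDeriv Λ (Ω *ᵥ x₀) (Ω *ᵥ z) := by
  refine ⟨fun hmin z => l1DirDeriv_pos_of_isUniqueMin hzero hnonzero hmin, fun hpos x hx hMx => ?_⟩
  have hMz : M *ᵥ (x - x₀) = 0 := by rw [mulVec_sub, hMx, sub_self]
  have hD := hpos _ hMz (sub_ne_zero.2 hx)
  have hle := sum_abs_add_l1DirDeriv_le hzero (Ω *ᵥ (x - x₀))
  rw [mulVec_sub] at hD hle
  simp only [Pi.sub_apply, add_sub_cancel] at hle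
  linarith

end UniqueMinimizer

theorem analysis_l1_unique_minimizer_iff_general
    {m d p : ℕ}
    (M : Matrix (Fin m) (Fin d) ℝ) (Ω : Matrix (Fin p) (Fin d) ℝ)
    (Λ : Finset (Fin p)) (x₀ : Fin d → ℝ)
    (hcosupp : ∀ i : Fin p, i ∈ Λ ↔ Ω.mulVec x₀ i = 0) :
    (∀ x : Fin d → ℝ, x ≠ x₀ → M.mulVec x = M.mulVec x₀ →
        ∑ i, |Ω.mulVec x₀ i| < ∑ i, |Ω.mulVec x i|)
    ↔
    (∀ z : Fin d → ℝ, M.mulVec z = 0 → z ≠ 0 →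
        |∑ i ∈ Λᶜ, Ω.mulVec z i * Real.sign (Ω.mulVec x₀ i)| <
          ∑ i ∈ Λ, |Ω.mulVec z i|) := by
  rw [isUniqueMin_iff_l1DirDeriv_pos (fun i => (hcosupp i).1) (fun i hi h => hi ((hcosupp i).2 h))]
  refine ⟨fun hpos z hMz hz => abs_lt.2 ⟨?_, ?_⟩, fun habs z hMz hz => ?_⟩
  · have hD := hpos z hMz hz
    rw [l1DirDeriv] at hD
    linarith
  · have hneg := hpos (-z) (by rw [mulVec_neg, hMz, neg_zero]) (neg_ne_zero.2 hz)
    rw [mulVec_neg, l1DirDeriv_neg] at hneg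
    linarith
  · rw [l1DirDeriv]
    linarith [neg_abs_le (∑ i ∈ Λᶜ, (Ω *ᵥ z) i * Real.sign ((Ω *ᵥ x₀) i)), habs z hMz hz]

/-- For a signal `x₀` whose cosupport is exactly `Λ`, `x₀` is the unique
minimizer of `‖Ωx‖₁` subject to `Mx = Mx₀` iff for every nonzero `z ∈ Null(M)`,
`|⟨Ω_{Λᶜ} z, sign(Ω_{Λᶜ} x₀)⟩| < ‖Ω_Λ z‖₁`. -/
theorem analysis_l1_unique_minimizer_iff
    {m d p : ℕ} (hmd : m < d)
    (M : Matrix (Fin m) (Fin d) ℝ) (Ω : Matrix (Fin p) (Fin d) ℝ)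
    (Λ : Finset (Fin p)) (x₀ : Fin d → ℝ)
    (hcosupp : ∀ i : Fin p, i ∈ Λ ↔ Ω.mulVec x₀ i = 0) :
    (∀ x : Fin d → ℝ, x ≠ x₀ → M.mulVec x = M.mulVec x₀ →
        ∑ i, |Ω.mulVec x₀ i| < ∑ i, |Ω.mulVec x i|)
    ↔
    (∀ z : Fin d → ℝ, M.mulVec z = 0 → z ≠ 0 →
        |∑ i ∈ Λᶜ, Ω.mulVec z i * Real.sign (Ω.mulVec x₀ i)| <
          ∑ i ∈ Λ, |Ω.mulVec z i|) :=
  analysis_l1_unique_minimizer_iff_general M Ω Λ x₀ hcosupp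
end

section
/- Let M ∈ ℝ^{m×d} with m < d, Ω ∈ ℝ^{p×d}, Λ ⊆ {1,…,p} with |Λ| = ℓ ≥ d−m, and let B ∈ ℝ^{(d−m)×d} be a matrix whose rows form a basis of Null(M). Assume the ℓ×(d−m) matrix Ω_Λ Bᵀ has full column rank d−m, so that the Gram matrix B Ω_Λᵀ Ω_Λ Bᵀ is invertible, and set P := Ω_Λ Bᵀ (B Ω_Λᵀ Ω_Λ Bᵀ)⁻¹ ∈ ℝ^{ℓ×(d−m)} (the Moore–Penrose pseudoinverse of B Ω_Λᵀ). If for every x ∈ ℝ^d with Ω_Λ x = 0 one has ‖P · B Ω_{Λᶜ}ᵀ · sign(Ω_{Λᶜ} x)‖_∞ < 1, then every x₀ with Ω_Λ x₀ = 0 is the unique minimizer of ‖Ωx‖₁ subject to Mx = Mx₀. -/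
/-!
Write `x = x₀ + z` with `Mz = 0`, so `z = Bᵀv` with `v ≠ 0`, and `u := Ω_Λ z = Av ≠ 0` for
`A := Ω_Λ Bᵀ`. Since `Ω_Λ x₀ = 0` and `|a + b| ≥ |a| + sign(a) b` on `Λᶜ`,
`‖Ωx‖₁ ≥ ‖Ωx₀‖₁ + ‖u‖₁ + ⟨s, Ω_{Λᶜ} z⟩` with `s := sign(Ω_{Λᶜ} x₀)`. As `P = A(AᵀA)⁻¹`
satisfies `Pᵀ A = 1`, the last term is `⟨B Ω_{Λᶜ}ᵀ s, v⟩ = ⟨c, u⟩` with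
`c := P B Ω_{Λᶜ}ᵀ s`, and `‖c‖_∞ < 1` makes `‖u‖₁ + ⟨c, u⟩ > 0`.
-/

open Matrix Finset

/-- The submatrix of `Ω` consisting of the rows indexed by `Λ`. -/
def rowSub {p d : ℕ} (Ω : Matrix (Fin p) (Fin d) ℝ) (Λ : Finset (Fin p)) :
    Matrix ↥Λ (Fin d) ℝ :=
  Ω.submatrix (fun i => (i : Fin p)) id

/-- `P = Ω_Λ Bᵀ (B Ω_Λᵀ Ω_Λ Bᵀ)⁻¹`: the Moore–Penrose pseudoinverse of `B Ω_Λᵀ`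
when `Ω_Λ Bᵀ` has full column rank. -/
noncomputable def pinvP {p d k : ℕ} (Ω : Matrix (Fin p) (Fin d) ℝ) (Λ : Finset (Fin p))
    (B : Matrix (Fin k) (Fin d) ℝ) : Matrix ↥Λ (Fin k) ℝ :=
  rowSub Ω Λ * B.transpose * ((B * (rowSub Ω Λ).transpose) * (rowSub Ω Λ * B.transpose))⁻¹

lemma Real.abs_add_sign_mul_le_abs_add (a b : ℝ) : |a| + Real.sign a * b ≤ |a + b| := by
  rcases lt_trichotomy a 0 with ha | rfl | ha
  · rw [Real.sign_of_neg ha, abs_of_neg ha]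
    linarith [neg_le_abs (a + b)]
  · simp
  · rw [Real.sign_of_pos ha, abs_of_pos ha]
    linarith [le_abs_self (a + b)]

lemma sum_abs_add_mul_pos {κ : Type*} [Fintype κ] {c u : κ → ℝ} (hc : ∀ j, |c j| < 1)
    (hu : ∃ j, u j ≠ 0) : 0 < ∑ j, (|u j| + c j * u j) := by
  obtain ⟨j₀, hj₀⟩ := hu
  calc 0 < ∑ j, (1 - |c j|) * |u j| :=
        sum_pos' (fun j _ => mul_nonneg (by linarith [hc j]) (abs_nonneg _))
          ⟨j₀, mem_univ _, mul_pos (by linarith [hc j₀]) (abs_pos.mpr hj₀)⟩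
    _ ≤ ∑ j, (|u j| + c j * u j) := sum_le_sum fun j _ => by
        nlinarith [neg_abs_le (c j * u j), abs_mul (c j) (u j)]

theorem sum_abs_lt_sum_abs_add_of_certificate {ι : Type*} [Fintype ι] [DecidableEq ι]
    {Λ : Finset ι} {a b : ι → ℝ} (ha : ∀ i ∈ Λ, a i = 0) {c : Λ → ℝ} (hc : ∀ j, |c j| < 1)
    (hb : ∃ i ∈ Λ, b i ≠ 0)
    (hcorr : ∑ i : ↥Λᶜ, Real.sign (a i) * b i = ∑ j : Λ, c j * b j) :
    ∑ i, |a i| < ∑ i, |a i + b i| := by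
  have hpos : 0 < ∑ j : Λ, (|b j| + c j * b j) := by
    obtain ⟨i, hi, hbi⟩ := hb
    exact sum_abs_add_mul_pos hc ⟨⟨i, hi⟩, hbi⟩
  have hΛ : ∑ i ∈ Λ, |a i + b i| = ∑ j : Λ, |b j| := by
    rw [← sum_coe_sort Λ]
    exact sum_congr rfl fun j _ => by rw [ha j j.2, zero_add]
  have hΛc : ∑ i ∈ Λᶜ, (|a i| + Real.sign (a i) * b i) ≤ ∑ i ∈ Λᶜ, |a i + b i| :=
    sum_le_sum fun i _ => Real.abs_add_sign_mul_le_abs_add (a i) (b i)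
  have ha_sum : ∑ i, |a i| = ∑ i ∈ Λᶜ, |a i| := by
    rw [← sum_add_sum_compl Λ, sum_eq_zero fun i hi => by rw [ha i hi, abs_zero], zero_add]
  rw [sum_add_distrib, ← sum_coe_sort Λᶜ (fun i => Real.sign (a i) * b i), hcorr] at hΛc
  rw [ha_sum, ← sum_add_sum_compl Λ (fun i => |a i + b i|), hΛ]
  rw [sum_add_distrib] at hpos
  linarith

lemma Matrix.exists_transpose_mulVec_eq_of_mem_span {R k n : Type*} [CommSemiring R]
    [Fintype k] {B : Matrix k n R} {z : n → R}
    (hz : z ∈ Submodule.span R (Set.range fun i => B i)) : ∃ v, Bᵀ *ᵥ v = z := by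
  rw [← B.row_def, ← range_vecMulLinear] at hz
  obtain ⟨v, rfl⟩ := hz
  exact ⟨v, mulVec_transpose B v⟩

theorem Matrix.mul_inv_transpose_mul_self_mulVec_dotProduct {κ n : Type*} [Fintype κ]
    [Fintype n] [DecidableEq n] {A : Matrix κ n ℝ} (hA : Function.Injective A.mulVec)
    (w v : n → ℝ) : (A * (Aᵀ * A)⁻¹) *ᵥ w ⬝ᵥ A *ᵥ v = w ⬝ᵥ v := by
  have hG : IsUnit (Aᵀ * A).det := by
    simpa [isUnit_iff_isUnit_det] using (PosDef.conjTranspose_mul_self A hA).isUnit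
  rw [dotProduct_mulVec, ← mulVec_transpose, mulVec_mulVec, ← Matrix.mul_assoc,
    mul_nonsing_inv _ hG, one_mulVec]

theorem pinvP_mul_mulVec_dotProduct {p d k : ℕ} {Ω : Matrix (Fin p) (Fin d) ℝ}
    {Λ : Finset (Fin p)} {B : Matrix (Fin k) (Fin d) ℝ}
    (hA : Function.Injective (rowSub Ω Λ * Bᵀ).mulVec) {κ : Type*} [Fintype κ]
    (D : Matrix κ (Fin d) ℝ) (s : κ → ℝ) (v : Fin k → ℝ) :
    (pinvP Ω Λ B * (B * Dᵀ)) *ᵥ s ⬝ᵥ rowSub Ω Λ *ᵥ (Bᵀ *ᵥ v) = s ⬝ᵥ D *ᵥ (Bᵀ *ᵥ v) := by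
  have hP : pinvP Ω Λ B = rowSub Ω Λ * Bᵀ * ((rowSub Ω Λ * Bᵀ)ᵀ * (rowSub Ω Λ * Bᵀ))⁻¹ := by
    rw [pinvP, transpose_mul, transpose_transpose]
  rw [hP, ← mulVec_mulVec, mulVec_mulVec v, mul_inv_transpose_mul_self_mulVec_dotProduct hA,
    mulVec_mulVec, dotProduct_mulVec, ← mulVec_transpose, transpose_mul, transpose_transpose]

theorem analysis_l1_sufficient_sign_condition_general
    {m d p : ℕ}
    (M : Matrix (Fin m) (Fin d) ℝ) (Ω : Matrix (Fin p) (Fin d) ℝ)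
    (Λ : Finset (Fin p))
    (B : Matrix (Fin (d - m)) (Fin d) ℝ)
    (hBspan : ∀ z : Fin d → ℝ, M.mulVec z = 0 →
      z ∈ Submodule.span ℝ (Set.range fun i : Fin (d - m) => B i))
    (hfullrank : ∀ v : Fin (d - m) → ℝ, (rowSub Ω Λ * B.transpose).mulVec v = 0 → v = 0)
    (hERC : ∀ x : Fin d → ℝ, (∀ i ∈ Λ, Ω.mulVec x i = 0) →
      ∀ j : ↥Λ,
        |(pinvP Ω Λ B * (B * (rowSub Ω Λᶜ).transpose)).mulVec
            (fun i : ↥Λᶜ => Real.sign (Ω.mulVec x (i : Fin p))) j| < 1) :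
    ∀ x₀ : Fin d → ℝ, (∀ i ∈ Λ, Ω.mulVec x₀ i = 0) →
      ∀ x : Fin d → ℝ, x ≠ x₀ → M.mulVec x = M.mulVec x₀ →
        ∑ i, |Ω.mulVec x₀ i| < ∑ i, |Ω.mulVec x i| := by
  intro x₀ hx₀ x hne hMx
  obtain ⟨v, hv⟩ := exists_transpose_mulVec_eq_of_mem_span
    (hBspan (x - x₀) (by rw [mulVec_sub, hMx, sub_self]))
  have hA : Function.Injective (rowSub Ω Λ * Bᵀ).mulVec :=
    (injective_iff_map_eq_zero (rowSub Ω Λ * Bᵀ).mulVecLin).mpr hfullrank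
  have hb : ∃ i ∈ Λ, (Ω *ᵥ (x - x₀)) i ≠ 0 := by
    by_contra! h
    have hv0 : v = 0 := hfullrank v <| funext fun j => by
      rw [← mulVec_mulVec, hv]
      exact h j j.2
    rw [hv0, mulVec_zero] at hv
    exact hne (sub_eq_zero.mp hv.symm)
  have hcorr := pinvP_mul_mulVec_dotProduct hA (rowSub Ω Λᶜ)
    (fun i : ↥Λᶜ => Real.sign ((Ω *ᵥ x₀) i)) v
  rw [hv] at hcorr
  -- The dot products in `hcorr` are definitionally the sums over `Λᶜ` and `Λ` used below.
  convert sum_abs_lt_sum_abs_add_of_certificate hx₀ (hERC x₀ hx₀) hb hcorr.symm using 3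
  rw [← Pi.add_apply, ← mulVec_add, add_sub_cancel]

/-- if `‖P · B Ω_{Λᶜ}ᵀ · sign(Ω_{Λᶜ} x)‖_∞ < 1` for every `x` with
`Ω_Λ x = 0`, then every `x₀` with `Ω_Λ x₀ = 0` is the unique minimizer of `‖Ωx‖₁`
subject to `Mx = Mx₀`. -/
theorem analysis_l1_sufficient_sign_condition
    {m d p ℓ : ℕ} (hmd : m < d)
    (M : Matrix (Fin m) (Fin d) ℝ) (Ω : Matrix (Fin p) (Fin d) ℝ)
    (Λ : Finset (Fin p)) (hcard : Λ.card = ℓ) (hℓ : d - m ≤ ℓ)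
    (B : Matrix (Fin (d - m)) (Fin d) ℝ)
    (hBnull : ∀ i : Fin (d - m), M.mulVec (B i) = 0)
    (hBli : LinearIndependent ℝ (fun i : Fin (d - m) => B i))
    (hBspan : ∀ z : Fin d → ℝ, M.mulVec z = 0 →
      z ∈ Submodule.span ℝ (Set.range fun i : Fin (d - m) => B i))
    (hfullrank : ∀ v : Fin (d - m) → ℝ, (rowSub Ω Λ * B.transpose).mulVec v = 0 → v = 0)
    (hERC : ∀ x : Fin d → ℝ, (∀ i ∈ Λ, Ω.mulVec x i = 0) →
      ∀ j : ↥Λ,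
        |(pinvP Ω Λ B * (B * (rowSub Ω Λᶜ).transpose)).mulVec
            (fun i : ↥Λᶜ => Real.sign (Ω.mulVec x (i : Fin p))) j| < 1) :
    ∀ x₀ : Fin d → ℝ, (∀ i ∈ Λ, Ω.mulVec x₀ i = 0) →
      ∀ x : Fin d → ℝ, x ≠ x₀ → M.mulVec x = M.mulVec x₀ →
        ∑ i, |Ω.mulVec x₀ i| < ∑ i, |Ω.mulVec x i| :=
  analysis_l1_sufficient_sign_condition_general M Ω Λ B hBspan hfullrank hERC
end

section
/- Let M ∈ ℝ^{m×d} with m < d, Ω ∈ ℝ^{p×d}, Λ ⊆ {1,…,p} with |Λ| = ℓ ≥ d−m, and let B ∈ ℝ^{(d−m)×d} be a matrix whose rows form a basis of Null(M). Assume Ω_Λ Bᵀ has full column rank d−m and set P := Ω_Λ Bᵀ (B Ω_Λᵀ Ω_Λ Bᵀ)⁻¹. If the ∞→∞ operator norm of the matrix P · B Ω_{Λᶜ}ᵀ (equal to the maximum over its rows of the ℓ¹-norm of the row) is strictly less than 1, then for every x ∈ ℝ^d with Ω_Λ x = 0 one has ‖P · B Ω_{Λᶜ}ᵀ · sign(Ω_{Λᶜ}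 x)‖_∞ < 1; consequently every x₀ with Ω_Λ x₀ = 0 is the unique minimizer of ‖Ωx‖₁ subject to Mx = Mx₀. -/
open Matrix Finset

/-! Write `x = x₀ + h` with `h = Bᵀ v` in the null space of `M`. Full column rank of `Ω_Λ Bᵀ`
gives `Pᵀ Ω_Λ Bᵀ = 1`, so `Ω_{Λᶜ} h = Qᵀ u` where `u = Ω_Λ h` and `Q = P B Ω_{Λᶜ}ᵀ`. As
`Ω_Λ x₀ = 0`, the subgradient inequality `|a + b| ≥ |a| + sign a · b` on `Λᶜ` yields
`‖Ωx‖₁ ≥ ‖Ωx₀‖₁ + ‖u‖₁ + ⟨Q sign(Ω_{Λᶜ} x₀), u⟩`, and the ERC bound `‖Q sign(·)‖_∞ < 1` makes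
the last two terms positive since `u ≠ 0`. -/

namespace Real

lemma abs_sign_le_one (t : ℝ) : |sign t| ≤ 1 := by
  rcases sign_apply_eq t with h | h | h <;> simp [h]

lemma sign_mul_self_eq_abs (t : ℝ) : sign t * t = |t| := by
  rcases lt_trichotomy t 0 with h | rfl | h
  · rw [sign_of_neg h, abs_of_neg h, neg_one_mul]
  · simp
  · rw [sign_of_pos h, abs_of_pos h, one_mul]

lemma abs_add_sign_mul_le (a b : ℝ) : |a| + sign a * b ≤ |a + b| :=
  calc |a| + sign a * b = sign a * (a + b) := by rw [← sign_mul_self_eq_abs, mul_add]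
    _ ≤ |sign a| * |a + b| := abs_mul (sign a) (a + b) ▸ le_abs_self _
    _ ≤ |a + b| := mul_le_of_le_one_left (abs_nonneg _) (abs_sign_le_one a)

end Real

namespace Matrix

variable {m n : Type*} [Fintype n]

lemma abs_mulVec_apply_le_sum_abs (Q : Matrix m n ℝ) {s : n → ℝ} (hs : ∀ i, |s i| ≤ 1)
    (j : m) : |(Q *ᵥ s) j| ≤ ∑ i, |Q j i| :=
  calc |∑ i, Q j i * s i| ≤ ∑ i, |Q j i * s i| := abs_sum_le_sum_abs _ _
    _ ≤ ∑ i, |Q j i| := sum_le_sum fun i _ => by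
      rw [abs_mul]; exact mul_le_of_le_one_right (abs_nonneg _) (hs i)

variable [Fintype m] [DecidableEq n]

lemma isUnit_transpose_mul_self (A : Matrix m n ℝ) (hA : Function.Injective A.mulVec) :
    IsUnit (Aᵀ * A) := by
  simpa using (PosDef.conjTranspose_mul_self A hA).isUnit

end Matrix

lemma neg_dotProduct_lt_sum_abs {n : Type*} [Fintype n] {q u : n → ℝ} (hq : ∀ j, |q j| < 1)
    (hu : u ≠ 0) :
    -(q ⬝ᵥ u) < ∑ j, |u j| := by
  obtain ⟨j₀, hj₀⟩ := Function.ne_iff.mp hu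
  calc -(q ⬝ᵥ u) ≤ |∑ j, q j * u j| := neg_le_abs _
    _ ≤ ∑ j, |q j| * |u j| := by
      simpa only [abs_mul] using abs_sum_le_sum_abs (fun j => q j * u j) univ
    _ < ∑ j, |u j| := by
      refine sum_lt_sum (fun j _ => mul_le_of_le_one_left (abs_nonneg _) (hq j).le)
        ⟨j₀, mem_univ _, ?_⟩
      exact mul_lt_of_lt_one_left (abs_pos.mpr hj₀) (hq j₀)

lemma sum_abs_lt_sum_abs_add {ι : Type*} [Fintype ι] [DecidableEq ι] {Λ : Finset ι}
    {a b : ι → ℝ} (q : Λ → ℝ) (ha : ∀ i ∈ Λ, a i = 0) (hb : (fun j : Λ => b j) ≠ 0)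
    (hq : ∀ j, |q j| < 1) (hcross : ∑ i : ↥Λᶜ, Real.sign (a i) * b i = ∑ j : Λ, q j * b j) :
    ∑ i, |a i| < ∑ i, |a i + b i| := by
  have split (f : ι → ℝ) : ∑ i, f i = ∑ i : Λ, f i + ∑ i : ↥Λᶜ, f i := by
    rw [sum_coe_sort, sum_coe_sort, sum_add_sum_compl]
  have abs_add_on_Λ : ∑ i : Λ, |a i + b i| = ∑ j : Λ, |b j| :=
    sum_congr rfl fun j _ => by rw [ha j j.2, zero_add]
  have abs_on_Λ : ∑ i : Λ, |a i| = 0 := sum_eq_zero fun j _ => by rw [ha j j.2, abs_zero]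
  have abs_add_on_Λc : ∑ i : ↥Λᶜ, |a i| + ∑ j : Λ, q j * b j ≤ ∑ i : ↥Λᶜ, |a i + b i| := by
    rw [← hcross, ← sum_add_distrib]
    exact sum_le_sum fun i _ => Real.abs_add_sign_mul_le _ _
  have cross_lt : -(∑ j : Λ, q j * b j) < ∑ j : Λ, |b j| := neg_dotProduct_lt_sum_abs hq hb
  rw [split, split fun i => |a i + b i|]
  linarith

section

variable {p d k : ℕ} (Ω : Matrix (Fin p) (Fin d) ℝ) (Λ : Finset (Fin p))
  {B : Matrix (Fin k) (Fin d) ℝ}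

lemma transpose_pinvP_mul (hA : Function.Injective (rowSub Ω Λ * Bᵀ).mulVec) :
    (pinvP Ω Λ B)ᵀ * (rowSub Ω Λ * Bᵀ) = 1 := by
  set A := rowSub Ω Λ * Bᵀ
  have hP : pinvP Ω Λ B = A * (Aᵀ * A)⁻¹ := by
    rw [pinvP, transpose_mul, transpose_transpose]
  have hG := (isUnit_transpose_mul_self A hA).map detMonoidHom
  rw [hP, transpose_mul, transpose_nonsing_inv, transpose_mul, transpose_transpose,
    Matrix.mul_assoc, nonsing_inv_mul _ hG]

lemma rowSub_compl_mulVec_vecMul (hA : Function.Injective (rowSub Ω Λ * Bᵀ).mulVec)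
    (v : Fin k → ℝ) :
    rowSub Ω Λᶜ *ᵥ (v ᵥ* B) =
      (pinvP Ω Λ B * (B * (rowSub Ω Λᶜ)ᵀ))ᵀ *ᵥ (rowSub Ω Λ *ᵥ (v ᵥ* B)) := by
  rw [← mulVec_transpose]
  simp only [mulVec_mulVec, transpose_mul, transpose_transpose, Matrix.mul_assoc,
    transpose_pinvP_mul Ω Λ hA, Matrix.mul_one]

end

theorem analysis_ERC_implies_l1_recovery_general
    {m d p : ℕ}
    (M : Matrix (Fin m) (Fin d) ℝ) (Ω : Matrix (Fin p) (Fin d) ℝ)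
    (Λ : Finset (Fin p))
    (B : Matrix (Fin (d - m)) (Fin d) ℝ)
    (hBspan : ∀ z : Fin d → ℝ, M.mulVec z = 0 →
      z ∈ Submodule.span ℝ (Set.range fun i : Fin (d - m) => B i))
    (hfullrank : ∀ v : Fin (d - m) → ℝ, (rowSub Ω Λ * B.transpose).mulVec v = 0 → v = 0)
    (hERC : ∀ j : ↥Λ,
      ∑ i : ↥Λᶜ, |(pinvP Ω Λ B * (B * (rowSub Ω Λᶜ).transpose)) j i| < 1) :
    (∀ x : Fin d → ℝ, (∀ i ∈ Λ, Ω.mulVec x i = 0) →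
      ∀ j : ↥Λ,
        |(pinvP Ω Λ B * (B * (rowSub Ω Λᶜ).transpose)).mulVec
            (fun i : ↥Λᶜ => Real.sign (Ω.mulVec x (i : Fin p))) j| < 1)
    ∧
    (∀ x₀ : Fin d → ℝ, (∀ i ∈ Λ, Ω.mulVec x₀ i = 0) →
      ∀ x : Fin d → ℝ, x ≠ x₀ → M.mulVec x = M.mulVec x₀ →
        ∑ i, |Ω.mulVec x₀ i| < ∑ i, |Ω.mulVec x i|) := by
  set Q := pinvP Ω Λ B * (B * (rowSub Ω Λᶜ)ᵀ)
  have sign_lt_one (x : Fin d → ℝ) (j : Λ) :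
      |(Q *ᵥ fun i : ↥Λᶜ => Real.sign ((Ω *ᵥ x) i)) j| < 1 :=
    (Q.abs_mulVec_apply_le_sum_abs (fun _ => Real.abs_sign_le_one _) j).trans_lt (hERC j)
  refine ⟨fun x _ => sign_lt_one x, fun x₀ hx₀ x hne hMx => ?_⟩
  have hA : Function.Injective (rowSub Ω Λ * Bᵀ).mulVec := fun a b hab =>
    sub_eq_zero.mp (hfullrank _ (by rw [mulVec_sub, hab, sub_self]))
  obtain ⟨v, hv⟩ : ∃ v, v ᵥ* B = x - x₀ := by
    have := hBspan (x - x₀) (by rw [mulVec_sub, hMx, sub_self])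
    rwa [← row_def, ← range_vecMulLinear] at this
  have hv0 : rowSub Ω Λ *ᵥ (v ᵥ* B) ≠ 0 := by
    rw [← mulVec_transpose, mulVec_mulVec]
    intro h0
    exact hne (sub_eq_zero.mp (by rw [← hv, hfullrank v h0, zero_vecMul]))
  rw [← add_sub_cancel x₀ x, ← hv, mulVec_add]
  refine sum_abs_lt_sum_abs_add _ hx₀ hv0 (sign_lt_one x₀) ?_
  change _ ⬝ᵥ (rowSub Ω Λᶜ *ᵥ (v ᵥ* B)) = _ ⬝ᵥ (rowSub Ω Λ *ᵥ (v ᵥ* B))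
  rw [rowSub_compl_mulVec_vecMul Ω Λ hA, dotProduct_mulVec, vecMul_transpose]

/-- analysis ERC: if the ∞→∞ operator norm of `P · B Ω_{Λᶜ}ᵀ`
(the maximum over rows of the ℓ¹-norm of the row) is `< 1`, then
`‖P · B Ω_{Λᶜ}ᵀ · sign(Ω_{Λᶜ} x)‖_∞ < 1` for every `x` with `Ω_Λ x = 0`, and
consequently every `x₀` with `Ω_Λ x₀ = 0` is the unique minimizer of `‖Ωx‖₁`
subject to `Mx = Mx₀`. -/
theorem analysis_ERC_implies_l1_recovery
    {m d p ℓ : ℕ} (hmd : m < d)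
    (M : Matrix (Fin m) (Fin d) ℝ) (Ω : Matrix (Fin p) (Fin d) ℝ)
    (Λ : Finset (Fin p)) (hcard : Λ.card = ℓ) (hℓ : d - m ≤ ℓ)
    (B : Matrix (Fin (d - m)) (Fin d) ℝ)
    (hBnull : ∀ i : Fin (d - m), M.mulVec (B i) = 0)
    (hBli : LinearIndependent ℝ (fun i : Fin (d - m) => B i))
    (hBspan : ∀ z : Fin d → ℝ, M.mulVec z = 0 →
      z ∈ Submodule.span ℝ (Set.range fun i : Fin (d - m) => B i))
    (hfullrank : ∀ v : Fin (d - m) → ℝ, (rowSub Ω Λ * B.transpose).mulVec v = 0 → v = 0)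
    (hERC : ∀ j : ↥Λ,
      ∑ i : ↥Λᶜ, |(pinvP Ω Λ B * (B * (rowSub Ω Λᶜ).transpose)) j i| < 1) :
    (∀ x : Fin d → ℝ, (∀ i ∈ Λ, Ω.mulVec x i = 0) →
      ∀ j : ↥Λ,
        |(pinvP Ω Λ B * (B * (rowSub Ω Λᶜ).transpose)).mulVec
            (fun i : ↥Λᶜ => Real.sign (Ω.mulVec x (i : Fin p))) j| < 1)
    ∧
    (∀ x₀ : Fin d → ℝ, (∀ i ∈ Λ, Ω.mulVec x₀ i = 0) →
      ∀ x : Fin d → ℝ, x ≠ x₀ → M.mulVec x = M.mulVec x₀ →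
        ∑ i, |Ω.mulVec x₀ i| < ∑ i, |Ω.mulVec x i|) :=
  analysis_ERC_implies_l1_recovery_general M Ω Λ B hBspan hfullrank hERC
end

section
/- Let M ∈ ℝ^{m×d} with m < d, Ω ∈ ℝ^{p×d}, Λ ⊆ {1,…,p} with |Λ| = ℓ ≥ d−m, and let B ∈ ℝ^{(d−m)×d} be a matrix whose rows form a basis of Null(M). Assume the ℓ×(d−m) matrix Ω_Λ Bᵀ has full column rank d−m, and set P := Ω_Λ Bᵀ (B Ω_Λᵀ Ω_Λ Bᵀ)⁻¹. Let x₀ ∈ ℝ^d satisfy Ω_Λ x₀ = 0, let y = M x₀, and let x̂ ∈ ℝ^d be a minimizer of ‖Ωx‖₂ subject to Mx = y (i.e., M x̂ = y and ‖Ω x̂‖₂ ≤ ‖Ωx‖₂ for every x with Mx = y). Then Ω_Λ x̂ = − P · B Ω_{Λᶜ}ᵀ · Ω_{Λᶜ} x̂. -/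
/-!
Along `Null(M)`, which is spanned by the rows of `B`, the minimiser satisfies the normal
equations `B Ωᵀ Ω x̂ = 0`. Splitting `Ωᵀ Ω = Ω_Λᵀ Ω_Λ + Ω_Λᶜᵀ Ω_Λᶜ` and writing `K = Ω_Λ Bᵀ`,
they read `Kᵀ (Ω_Λ x̂) = - B Ω_Λᶜᵀ Ω_Λᶜ x̂`. Since `x̂ - x₀ ∈ Null(M)` and `Ω_Λ x₀ = 0`, the vector
`Ω_Λ x̂` lies in the range of `K`, on which `P Kᵀ = K (Kᵀ K)⁻¹ Kᵀ` is the identity.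
-/

open Matrix Finset

section LeastSquares

variable {k n p : Type*} [Fintype n] [Fintype p]

theorem dotProduct_eq_zero_of_forall_le_add_smul {u v : n → ℝ}
    (h : ∀ s : ℝ, u ⬝ᵥ u ≤ (u + s • v) ⬝ᵥ (u + s • v)) : u ⬝ᵥ v = 0 := by
  -- `s ↦ s² ⟪v, v⟫ + 2 s ⟪u, v⟫` is never negative, so its discriminant `4 ⟪u, v⟫²` is `≤ 0`.
  have hdisc : discrim (v ⬝ᵥ v) (2 * (u ⬝ᵥ v)) 0 ≤ 0 := discrim_le_zero fun s => by
    have hs := h s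
    simp only [add_dotProduct, dotProduct_add, smul_dotProduct, dotProduct_smul, smul_eq_mul,
      dotProduct_comm v u] at hs
    linarith
  rw [discrim] at hdisc
  nlinarith [sq_nonneg (u ⬝ᵥ v)]

theorem dotProduct_mulVec_eq_zero_of_isMin {M : Matrix k n ℝ} {Ω : Matrix p n ℝ} {xh w : n → ℝ}
    (hmin : ∀ x, M *ᵥ x = M *ᵥ xh → (Ω *ᵥ xh) ⬝ᵥ (Ω *ᵥ xh) ≤ (Ω *ᵥ x) ⬝ᵥ (Ω *ᵥ x))
    (hw : M *ᵥ w = 0) : (Ω *ᵥ xh) ⬝ᵥ (Ω *ᵥ w) = 0 :=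
  dotProduct_eq_zero_of_forall_le_add_smul fun s => by
    simpa only [mulVec_add, mulVec_smul] using
      hmin (xh + s • w) (by rw [mulVec_add, mulVec_smul, hw, smul_zero, add_zero])

theorem mulVec_transpose_mulVec_eq_zero_of_isMin {r : Type*} {M : Matrix k n ℝ}
    {Ω : Matrix p n ℝ} {B : Matrix r n ℝ} {xh : n → ℝ}
    (hmin : ∀ x, M *ᵥ x = M *ᵥ xh → (Ω *ᵥ xh) ⬝ᵥ (Ω *ᵥ xh) ≤ (Ω *ᵥ x) ⬝ᵥ (Ω *ᵥ x))
    (hB : ∀ i, M *ᵥ B i = 0) : B *ᵥ (Ωᵀ *ᵥ (Ω *ᵥ xh)) = 0 := by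
  funext i
  rw [Pi.zero_apply, ← dotProduct_mulVec_eq_zero_of_isMin hmin (hB i), dotProduct_comm]
  simp only [mulVec, dotProduct_mulVec, vecMul_transpose]

end LeastSquares

theorem isUnit_transpose_mul_self {R l k : Type*} [Field R] [LinearOrder R]
    [IsStrictOrderedRing R] [Fintype l] [Fintype k] [DecidableEq k] {K : Matrix l k R}
    (hK : ∀ v, K *ᵥ v = 0 → v = 0) : IsUnit (Kᵀ * K) := by
  have hker : LinearMap.ker (Kᵀ * K).mulVecLin = ⊥ := by
    rw [ker_mulVecLin_transpose_mul_self, LinearMap.ker_eq_bot]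
    exact (injective_iff_map_eq_zero K.mulVecLin).mpr hK
  exact mulVec_injective_iff_isUnit.mp (LinearMap.ker_eq_bot.mp hker)

theorem transpose_rowSub_mul_add_compl {p d : ℕ} (Ω : Matrix (Fin p) (Fin d) ℝ)
    (Λ : Finset (Fin p)) :
    (rowSub Ω Λ)ᵀ * rowSub Ω Λ + (rowSub Ω Λᶜ)ᵀ * rowSub Ω Λᶜ = Ωᵀ * Ω := by
  ext a b
  simp only [Matrix.add_apply, mul_apply, transpose_apply, rowSub, submatrix_apply, id]
  rw [Finset.sum_coe_sort Λ (fun i => Ω i a * Ω i b),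
    Finset.sum_coe_sort Λᶜ (fun i => Ω i a * Ω i b)]
  exact Finset.sum_add_sum_compl Λ _

theorem pinvP_mul_transpose_mul_self {p d k : ℕ} {Ω : Matrix (Fin p) (Fin d) ℝ}
    {Λ : Finset (Fin p)} {B : Matrix (Fin k) (Fin d) ℝ}
    (hfullrank : ∀ v, (rowSub Ω Λ * Bᵀ) *ᵥ v = 0 → v = 0) :
    pinvP Ω Λ B * (B * (rowSub Ω Λ)ᵀ) * (rowSub Ω Λ * Bᵀ) = rowSub Ω Λ * Bᵀ := by
  have hBA : B * (rowSub Ω Λ)ᵀ = (rowSub Ω Λ * Bᵀ)ᵀ := by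
    rw [transpose_mul, transpose_transpose]
  rw [pinvP, hBA, Matrix.mul_assoc _ _ (rowSub Ω Λ * Bᵀ), Matrix.mul_assoc,
    nonsing_inv_mul _ ((isUnit_iff_isUnit_det _).mp (isUnit_transpose_mul_self hfullrank)),
    Matrix.mul_one]

theorem GAP_coefficient_relation_general
    {m d p : ℕ}
    (M : Matrix (Fin m) (Fin d) ℝ) (Ω : Matrix (Fin p) (Fin d) ℝ)
    (Λ : Finset (Fin p))
    (B : Matrix (Fin (d - m)) (Fin d) ℝ)
    (hBnull : ∀ i : Fin (d - m), M.mulVec (B i) = 0)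
    (hBspan : ∀ z : Fin d → ℝ, M.mulVec z = 0 →
      z ∈ Submodule.span ℝ (Set.range fun i : Fin (d - m) => B i))
    (hfullrank : ∀ v : Fin (d - m) → ℝ, (rowSub Ω Λ * B.transpose).mulVec v = 0 → v = 0)
    (x₀ : Fin d → ℝ) (hx₀ : ∀ i ∈ Λ, Ω.mulVec x₀ i = 0)
    (xh : Fin d → ℝ) (hfeas : M.mulVec xh = M.mulVec x₀)
    (hmin : ∀ x : Fin d → ℝ, M.mulVec x = M.mulVec x₀ →
      Real.sqrt (∑ i, (Ω.mulVec xh i) ^ 2) ≤ Real.sqrt (∑ i, (Ω.mulVec x i) ^ 2)) :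
    (rowSub Ω Λ).mulVec xh =
      -((pinvP Ω Λ B * (B * (rowSub Ω Λᶜ).transpose)).mulVec
          ((rowSub Ω Λᶜ).mulVec xh)) := by
  set A := rowSub Ω Λ
  set C := rowSub Ω Λᶜ
  obtain ⟨t, ht⟩ := (Submodule.mem_span_range_iff_exists_fun ℝ).mp
    (hBspan (xh - x₀) (by rw [mulVec_sub, hfeas, sub_self]))
  have hAxh : A *ᵥ xh = (A * Bᵀ) *ᵥ t := by
    have hAx₀ : A *ᵥ x₀ = 0 := funext fun i => hx₀ i i.2
    rw [← mulVec_mulVec, mulVec_transpose, vecMul_eq_sum, ht, mulVec_sub, hAx₀, sub_zero]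
  have hmin_dot : ∀ x, M *ᵥ x = M *ᵥ xh → (Ω *ᵥ xh) ⬝ᵥ (Ω *ᵥ xh) ≤ (Ω *ᵥ x) ⬝ᵥ (Ω *ᵥ x) :=
    fun x hx => by
      simpa only [dotProduct, ← sq] using
        (Real.sqrt_le_sqrt_iff (by positivity)).mp (hmin x (hx.trans hfeas))
  have hnormal : (B * Aᵀ) *ᵥ (A *ᵥ xh) + (B * Cᵀ) *ᵥ (C *ᵥ xh) = 0 := by
    rw [mulVec_mulVec, mulVec_mulVec, ← add_mulVec, Matrix.mul_assoc, Matrix.mul_assoc,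
      ← Matrix.mul_add, transpose_rowSub_mul_add_compl, ← mulVec_mulVec, ← mulVec_mulVec]
    exact mulVec_transpose_mulVec_eq_zero_of_isMin hmin_dot hBnull
  rw [← mulVec_mulVec, eq_neg_of_add_eq_zero_right hnormal, mulVec_neg, neg_neg, hAxh,
    mulVec_mulVec, mulVec_mulVec, pinvP_mul_transpose_mul_self hfullrank]

/-- for `x₀` with `Ω_Λ x₀ = 0` and `xh` a minimizer of `‖Ωx‖₂`
subject to `Mx = Mx₀`, one has `Ω_Λ xh = − P · B Ω_{Λᶜ}ᵀ · Ω_{Λᶜ} xh`. -/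
theorem GAP_coefficient_relation
    {m d p ℓ : ℕ} (hmd : m < d)
    (M : Matrix (Fin m) (Fin d) ℝ) (Ω : Matrix (Fin p) (Fin d) ℝ)
    (Λ : Finset (Fin p)) (hcard : Λ.card = ℓ) (hℓ : d - m ≤ ℓ)
    (B : Matrix (Fin (d - m)) (Fin d) ℝ)
    (hBnull : ∀ i : Fin (d - m), M.mulVec (B i) = 0)
    (hBli : LinearIndependent ℝ (fun i : Fin (d - m) => B i))
    (hBspan : ∀ z : Fin d → ℝ, M.mulVec z = 0 →
      z ∈ Submodule.span ℝ (Set.range fun i : Fin (d - m) => B i))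
    (hfullrank : ∀ v : Fin (d - m) → ℝ, (rowSub Ω Λ * B.transpose).mulVec v = 0 → v = 0)
    (x₀ : Fin d → ℝ) (hx₀ : ∀ i ∈ Λ, Ω.mulVec x₀ i = 0)
    (xh : Fin d → ℝ) (hfeas : M.mulVec xh = M.mulVec x₀)
    (hmin : ∀ x : Fin d → ℝ, M.mulVec x = M.mulVec x₀ →
      Real.sqrt (∑ i, (Ω.mulVec xh i) ^ 2) ≤ Real.sqrt (∑ i, (Ω.mulVec x i) ^ 2)) :
    (rowSub Ω Λ).mulVec xh =
      -((pinvP Ω Λ B * (B * (rowSub Ω Λᶜ).transpose)).mulVec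
          ((rowSub Ω Λᶜ).mulVec xh)) :=
  GAP_coefficient_relation_general M Ω Λ B hBnull hBspan hfullrank x₀ hx₀ xh hfeas hmin
end

section
/- Let M ∈ ℝ^{m×d}, Ω ∈ ℝ^{p×d}, and ℓ ∈ ℕ. For Λ ⊆ {1,…,p} let A_Λ = {x ∈ ℝ^d : Ω_Λ x = 0}, and call x ∈ ℝ^d ℓ-cosparse if Ω_Λ x = 0 for some Λ with |Λ| ≥ ℓ. Then the following three statements are equivalent: (1) for every y ∈ ℝ^m, if the linear system y = Mx admits an ℓ-cosparse solution, then this is the unique ℓ-cosparse solution; (2) M is injective on the union ⋃_{|Λ| ≥ ℓ} A_Λ, i.e., whenever x₁, x₂ are both ℓ-cosparse and M x₁ = M x₂ then x₁ = x₂; (3) (A_{Λ₁} + A_{Λ₂}) ∩ Null(M) = {0} for all Λ₁, Λ₂ ⊆ {1,…,p} with |Λ₁| ≥ ℓ and |Λ₂| ≥ ℓ. -/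
open Matrix Finset

/-- A vector `x` is `ℓ`-cosparse w.r.t. `Ω` if `Ω_Λ x = 0` for some `Λ` with `|Λ| ≥ ℓ`. -/
def Cosparse {p d : ℕ} (Ω : Matrix (Fin p) (Fin d) ℝ) (ℓ : ℕ) (x : Fin d → ℝ) : Prop :=
  ∃ Λ : Finset (Fin p), ℓ ≤ Λ.card ∧ ∀ i ∈ Λ, Ω.mulVec x i = 0

theorem unique_solution_iff_injOn {α β : Type*} (f : α → β) (s : Set α) :
    (∀ y, ∀ x ∈ s, f x = y → ∀ x' ∈ s, f x' = y → x' = x) ↔ Set.InjOn f s :=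
  ⟨fun h _ h₁ x₂ h₂ he => h (f x₂) x₂ h₂ rfl _ h₁ he,
    fun h _ _ hx hxy _ hx' hx'y => h hx' hx (hx'y.trans hxy.symm)⟩

theorem injOn_iff_add_eq_zero {G H F : Type*} [AddCommGroup G] [AddGroup H] [FunLike F G H]
    [AddMonoidHomClass F G H] (f : F) {s : Set G} (hs : ∀ x ∈ s, -x ∈ s) :
    Set.InjOn f s ↔ ∀ u ∈ s, ∀ v ∈ s, f (u + v) = 0 → u + v = 0 := by
  constructor
  · intro h u hu v hv hker
    have hfu : f u = f (-v) := by
      rw [map_neg, eq_neg_iff_add_eq_zero, ← map_add, hker]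
    rw [h hu (hs v hv) hfu, neg_add_cancel]
  · intro h x₁ h₁ x₂ h₂ he
    have hker : f (x₁ + -x₂) = 0 := by rw [map_add, map_neg, he, add_neg_cancel]
    exact add_neg_eq_zero.mp (h x₁ h₁ (-x₂) (hs x₂ h₂) hker)

theorem Cosparse.neg {p d : ℕ} {Ω : Matrix (Fin p) (Fin d) ℝ} {ℓ : ℕ} {x : Fin d → ℝ}
    (hx : Cosparse Ω ℓ x) : Cosparse Ω ℓ (-x) := by
  obtain ⟨Λ, hcard, hΛ⟩ := hx
  exact ⟨Λ, hcard, fun i hi => by rw [mulVec_neg, Pi.neg_apply, hΛ i hi, neg_zero]⟩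

/-- equivalence of (1) uniqueness of ℓ-cosparse solutions of `y = Mx`,
(2) injectivity of `M` on the union of the ℓ-cosparse analysis subspaces, and
(3) `(A_{Λ₁} + A_{Λ₂}) ∩ Null(M) = {0}` for all `|Λ₁|, |Λ₂| ≥ ℓ`. -/
theorem cosparse_uniqueness_tfae
    {m d p : ℕ} (M : Matrix (Fin m) (Fin d) ℝ) (Ω : Matrix (Fin p) (Fin d) ℝ) (ℓ : ℕ) :
    ((∀ y : Fin m → ℝ, ∀ x : Fin d → ℝ, Cosparse Ω ℓ x → M.mulVec x = y →
        ∀ x' : Fin d → ℝ, Cosparse Ω ℓ x' → M.mulVec x' = y → x' = x)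
      ↔
      (∀ x₁ x₂ : Fin d → ℝ, Cosparse Ω ℓ x₁ → Cosparse Ω ℓ x₂ →
        M.mulVec x₁ = M.mulVec x₂ → x₁ = x₂))
    ∧
    ((∀ x₁ x₂ : Fin d → ℝ, Cosparse Ω ℓ x₁ → Cosparse Ω ℓ x₂ →
        M.mulVec x₁ = M.mulVec x₂ → x₁ = x₂)
      ↔
      (∀ Λ₁ Λ₂ : Finset (Fin p), ℓ ≤ Λ₁.card → ℓ ≤ Λ₂.card →
        ∀ u v : Fin d → ℝ, (∀ i ∈ Λ₁, Ω.mulVec u i = 0) → (∀ i ∈ Λ₂, Ω.mulVec v i = 0) →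
          M.mulVec (u + v) = 0 → u + v = 0)) := by
  have hinj : (∀ x₁ x₂ : Fin d → ℝ, Cosparse Ω ℓ x₁ → Cosparse Ω ℓ x₂ →
      M.mulVec x₁ = M.mulVec x₂ → x₁ = x₂) ↔ Set.InjOn M.mulVec {x | Cosparse Ω ℓ x} :=
    ⟨fun h _ h₁ _ h₂ => h _ _ h₁ h₂, fun h _ _ h₁ h₂ => h h₁ h₂⟩
  rw [hinj]
  refine ⟨unique_solution_iff_injOn M.mulVec _, ?_⟩
  refine (injOn_iff_add_eq_zero M.mulVecLin (s := {x | Cosparse Ω ℓ x})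
    fun _ => Cosparse.neg).trans ?_
  constructor
  · rintro h Λ₁ Λ₂ h₁ h₂ u v hu hv
    exact h u ⟨Λ₁, h₁, hu⟩ v ⟨Λ₂, h₂, hv⟩
  · rintro h u ⟨Λ₁, h₁, hu⟩ v ⟨Λ₂, h₂, hv⟩
    exact h Λ₁ Λ₂ h₁ h₂ u v hu hv
end

section
/- Let M ∈ ℝ^{m×d} have rank m, let Ω ∈ ℝ^{p×d}, and let Λ ⊆ {1,…,p}. Assume M and Ω_Λ are mutually independent in the sense that the row space of M and the row space of Ω_Λ intersect trivially: Range(Mᵀ) ∩ Range(Ω_Λᵀ) = {0}. Then Null(Ω_Λ) ∩ Null(M) = {0} (equivalently, the stacked matrix [M; Ω_Λ] is injective, so any x with Ω_Λ x = 0 is uniquely determined by y = Mx) if and only if dim Null(Ω_Λ) ≤ m. -/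
/-!
Stack `Ω_Λ` on top of `M`. The kernel of the stacked matrix is `Null(Ω_Λ) ∩ Null(M)`, and since
the two row spaces meet only in `0`, its rank is `rank Ω_Λ + m`. Rank–nullity then says that the
kernel vanishes iff `d ≤ rank Ω_Λ + m`, i.e. iff `dim Null(Ω_Λ) = d - rank Ω_Λ ≤ m`.
-/

open Matrix Finset

namespace Matrix

section CommSemiring

variable {R : Type*} [CommSemiring R] {m₁ m₂ n : Type*}

theorem ker_mulVecLin_fromRows [Fintype n] (A : Matrix m₁ n R) (B : Matrix m₂ n R) :
    LinearMap.ker (fromRows A B).mulVecLin =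
      LinearMap.ker A.mulVecLin ⊓ LinearMap.ker B.mulVecLin := by
  ext v
  simp [fromRows_mulVec, ← Sum.elim_zero_zero, Sum.elim_eq_iff]

theorem span_range_fromRows (A : Matrix m₁ n R) (B : Matrix m₂ n R) :
    Submodule.span R (Set.range (fromRows A B)) =
      Submodule.span R (Set.range A) ⊔ Submodule.span R (Set.range B) := by
  rw [← Submodule.span_union]
  exact congrArg _ (Set.Sum.elim_range A B)

end CommSemiring

variable {K : Type*} [Field K] {m m₁ m₂ n : Type*}

theorem rank_add_finrank_ker_mulVecLin [Fintype n] (A : Matrix m n K) :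
    A.rank + Module.finrank K (LinearMap.ker A.mulVecLin) = Fintype.card n := by
  rw [rank, LinearMap.finrank_range_add_finrank_ker, Module.finrank_fintype_fun_eq_card]

theorem rank_fromRows_of_disjoint [Fintype n] [Finite m₁] [Finite m₂]
    (A : Matrix m₁ n K) (B : Matrix m₂ n K)
    (h : Disjoint (Submodule.span K (Set.range A)) (Submodule.span K (Set.range B))) :
    (fromRows A B).rank = A.rank + B.rank := by
  rw [rank_eq_finrank_span_row, rank_eq_finrank_span_row, rank_eq_finrank_span_row, row, row, row,
    span_range_fromRows, ← Submodule.finrank_sup_add_finrank_inf_eq, h.eq_bot, finrank_bot,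
    add_zero]

theorem inf_ker_mulVecLin_eq_bot_iff_of_disjoint [Fintype n] [Finite m₁] [Finite m₂]
    (A : Matrix m₁ n K) (B : Matrix m₂ n K)
    (h : Disjoint (Submodule.span K (Set.range B)) (Submodule.span K (Set.range A))) :
    LinearMap.ker A.mulVecLin ⊓ LinearMap.ker B.mulVecLin = ⊥ ↔
      Module.finrank K (LinearMap.ker A.mulVecLin) ≤ B.rank := by
  have hAB := rank_add_finrank_ker_mulVecLin (fromRows A B)
  have hA := rank_add_finrank_ker_mulVecLin A
  rw [rank_fromRows_of_disjoint A B h.symm] at hAB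
  rw [← ker_mulVecLin_fromRows, ← Submodule.finrank_eq_zero]
  omega

end Matrix

/-- if `M` has rank `m` and the row spaces of `M` and `Ω_Λ` intersect
trivially, then `Null(Ω_Λ) ∩ Null(M) = {0}` iff `dim Null(Ω_Λ) ≤ m`. -/
theorem known_cosupport_uniqueness_iff
    {m d p : ℕ} (M : Matrix (Fin m) (Fin d) ℝ) (hrank : M.rank = m)
    (Ω : Matrix (Fin p) (Fin d) ℝ) (Λ : Finset (Fin p))
    (hindep : Submodule.span ℝ (Set.range fun j : Fin m => M j) ⊓
        Submodule.span ℝ (Set.range fun i : ↥Λ => Ω (i : Fin p)) = ⊥) :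
    (LinearMap.ker (rowSub Ω Λ).mulVecLin ⊓ LinearMap.ker M.mulVecLin = ⊥)
    ↔
    Module.finrank ℝ ↥(LinearMap.ker (rowSub Ω Λ).mulVecLin) ≤ m := by
  simpa only [hrank] using
    inf_ker_mulVecLin_eq_bot_iff_of_disjoint (rowSub Ω Λ) M (disjoint_iff.mpr hindep)
end

section
/- Consider the N×N grid graph with vertex set V = {1,…,N}² (so d = N² vertices) and edge set E of horizontally and vertically adjacent pairs. For every nonempty Λ ⊆ E, the subspace W_Λ = {x ∈ ℝ^V : x(u) = x(v) for every {u,v} ∈ Λ} (the null space of the finite difference operator restricted to Λ) satisfies dim W_Λ ≤ N² − |Λ|/2. Consequently, κ(ℓ) := max_{Λ ⊆ E, |Λ| ≥ ℓ} dim W_Λ ≤ N² − ℓ/2 for every 1 ≤ ℓ ≤ |E|. -/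
open Finset

/-- The N×N grid graph: vertices are `Fin N × Fin N`, with edges between pairs of
vertices that agree in one coordinate and differ by exactly 1 in the other. -/
def gridGraph (N : ℕ) : SimpleGraph (Fin N × Fin N) :=
  SimpleGraph.fromRel (fun u v =>
    (u.1 = v.1 ∧ (u.2 : ℕ) + 1 = (v.2 : ℕ)) ∨ (u.2 = v.2 ∧ (u.1 : ℕ) + 1 = (v.1 : ℕ)))

/-- The null space of the finite difference operator restricted to the edge set `Λ`. -/
def diffNullSpace {V : Type*} [Fintype V] [DecidableEq V] (Λ : Finset (Sym2 V)) :
    Submodule ℝ (V → ℝ) where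
  carrier := {x | ∀ u v : V, s(u, v) ∈ Λ → x u = x v}
  add_mem' := by
    intro a b ha hb u v h
    simp only [Pi.add_apply, ha u v h, hb u v h]
  zero_mem' := by
    intro u v h
    rfl
  smul_mem' := by
    intro c x hx u v h
    simp only [Pi.smul_apply, hx u v h]

/-!
Give the vertex `(i, j)` of the grid the height `i + j`, so that every grid edge joins two
consecutive heights, and call a vertex a head of `Λ` if it is the upper endpoint of an edge of
`Λ`. A vertex has at most two lower grid neighbours, so `Λ` has at least `|Λ| / 2` heads. An
element of `W_Λ` that vanishes off the heads vanishes everywhere (by induction on the height,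
each head takes the value of a lower neighbour), so restricting to the non-heads is injective on
`W_Λ` and `dim W_Λ ≤ N² - |Λ| / 2`.
-/

open Module

section Heads

variable {V : Type*} [Fintype V] [DecidableEq V]

def lowerNeighbors (Λ : Finset (Sym2 V)) (h : V → ℕ) (v : V) : Finset V :=
  {u | h u < h v ∧ s(u, v) ∈ Λ}

def edgeHeads (Λ : Finset (Sym2 V)) (h : V → ℕ) : Finset V :=
  {v | (lowerNeighbors Λ h v).Nonempty}

theorem eq_zero_of_mem_diffNullSpace_of_forall_notMem_edgeHeads {Λ : Finset (Sym2 V)}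
    (h : V → ℕ) {x : V → ℝ} (hx : x ∈ diffNullSpace Λ)
    (hx₀ : ∀ v ∉ edgeHeads Λ h, x v = 0) : x = 0 := by
  funext v
  induction hv : h v using Nat.strong_induction_on generalizing v with
  | _ n ih =>
    by_cases hhead : v ∈ edgeHeads Λ h
    · obtain ⟨u, hu⟩ := (mem_filter.1 hhead).2
      obtain ⟨hlt, hedge⟩ := (mem_filter.1 hu).2
      rw [← hx u v hedge]
      exact ih _ (hv ▸ hlt) u rfl
    · exact hx₀ v hhead

theorem finrank_diffNullSpace_add_card_edgeHeads_le (Λ : Finset (Sym2 V)) (h : V → ℕ) :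
    finrank ℝ (diffNullSpace Λ) + #(edgeHeads Λ h) ≤ Fintype.card V := by
  let restrict : diffNullSpace Λ →ₗ[ℝ] ({v // v ∉ edgeHeads Λ h} → ℝ) :=
    LinearMap.funLeft ℝ ℝ Subtype.val ∘ₗ (diffNullSpace Λ).subtype
  have hinj : Function.Injective restrict := by
    rw [← LinearMap.ker_eq_bot, LinearMap.ker_eq_bot']
    intro x hx
    exact Subtype.ext <| eq_zero_of_mem_diffNullSpace_of_forall_notMem_edgeHeads h x.2
      fun v hv => congrFun hx ⟨v, hv⟩
  have hdim := LinearMap.finrank_le_finrank_of_injective hinj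
  rw [finrank_fintype_fun_eq_card, Fintype.card_subtype_compl, Fintype.card_coe] at hdim
  have := card_le_univ (edgeHeads Λ h)
  omega

theorem card_le_mul_card_edgeHeads {Λ : Finset (Sym2 V)} {h : V → ℕ} {k : ℕ}
    (hΛ : ∀ u v, s(u, v) ∈ Λ → h u ≠ h v) (hk : ∀ v, #(lowerNeighbors Λ h v) ≤ k) :
    #Λ ≤ k * #(edgeHeads Λ h) := by
  have hcover : Λ ⊆ (edgeHeads Λ h).biUnion fun v => (lowerNeighbors Λ h v).image (s(·, v)) := by
    intro e he
    induction e using Sym2.ind with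
    | _ a b =>
      wlog hab : h a < h b generalizing a b
      · exact Sym2.eq_swap ▸ this b a (Sym2.eq_swap ▸ he)
          ((hΛ a b he).symm.lt_of_le (not_lt.1 hab))
      have ha : a ∈ lowerNeighbors Λ h b := mem_filter.2 ⟨mem_univ _, hab, he⟩
      exact mem_biUnion.2 ⟨b, mem_filter.2 ⟨mem_univ _, a, ha⟩, mem_image_of_mem _ ha⟩
  calc #Λ ≤ ∑ v ∈ edgeHeads Λ h, #((lowerNeighbors Λ h v).image (s(·, v))) :=
        (card_le_card hcover).trans card_biUnion_le
    _ ≤ ∑ v ∈ edgeHeads Λ h, k := sum_le_sum fun v _ => card_image_le.trans (hk v)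
    _ = k * #(edgeHeads Λ h) := by rw [sum_const, smul_eq_mul, mul_comm]

theorem mul_finrank_diffNullSpace_add_card_le {Λ : Finset (Sym2 V)} {h : V → ℕ} {k : ℕ}
    (hΛ : ∀ u v, s(u, v) ∈ Λ → h u ≠ h v) (hk : ∀ v, #(lowerNeighbors Λ h v) ≤ k) :
    k * finrank ℝ (diffNullSpace Λ) + #Λ ≤ k * Fintype.card V := by
  have := finrank_diffNullSpace_add_card_edgeHeads_le Λ h
  calc k * finrank ℝ (diffNullSpace Λ) + #Λ
      ≤ k * finrank ℝ (diffNullSpace Λ) + k * #(edgeHeads Λ h) :=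
        Nat.add_le_add_left (card_le_mul_card_edgeHeads hΛ hk) _
    _ ≤ k * Fintype.card V := by rw [← mul_add]; exact Nat.mul_le_mul_left k this

end Heads

section Grid

variable {N : ℕ}

def gridHeight (v : Fin N × Fin N) : ℕ := v.1 + v.2

theorem gridGraph_adj_of_gridHeight_lt {u v : Fin N × Fin N} (hadj : (gridGraph N).Adj u v)
    (hlt : gridHeight u < gridHeight v) :
    (u.1 = v.1 ∧ (u.2 : ℕ) + 1 = v.2) ∨ (u.2 = v.2 ∧ (u.1 : ℕ) + 1 = v.1) := by
  obtain ⟨-, huv | hvu⟩ := hadj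
  · exact huv
  · unfold gridHeight at hlt
    omega

theorem gridHeight_ne_of_adj {u v : Fin N × Fin N} (hadj : (gridGraph N).Adj u v) :
    gridHeight u ≠ gridHeight v := by
  obtain ⟨-, huv | hvu⟩ := hadj <;> unfold gridHeight <;> omega

theorem card_lowerNeighbors_gridHeight_le_two {Λ : Finset (Sym2 (Fin N × Fin N))}
    (hΛ : (Λ : Set (Sym2 (Fin N × Fin N))) ⊆ (gridGraph N).edgeSet) (v : Fin N × Fin N) :
    #(lowerNeighbors Λ gridHeight v) ≤ 2 := by
  have hrel {u : Fin N × Fin N} (hu : u ∈ lowerNeighbors Λ gridHeight v) :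
      (u.1 = v.1 ∧ (u.2 : ℕ) + 1 = v.2) ∨ (u.2 = v.2 ∧ (u.1 : ℕ) + 1 = v.1) := by
    obtain ⟨hlt, hedge⟩ := (mem_filter.1 hu).2
    exact gridGraph_adj_of_gridHeight_lt (hΛ hedge) hlt
  -- A lower grid neighbour of `v` is determined by which coordinate it shares with `v`.
  have hinj : Set.InjOn (fun u : Fin N × Fin N => decide (u.1 = v.1)) (lowerNeighbors Λ gridHeight v) := by
    intro a ha b hb hab
    have := hrel ha
    have := hrel hb
    simp only [decide_eq_decide] at hab
    ext <;> omega
  simpa using card_le_card_of_injOn _ (fun _ _ => mem_univ _) hinj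

end Grid

/-- for every nonempty set `Λ` of edges of the N×N grid graph,
`dim W_Λ ≤ N² − |Λ|/2` (i.e. `2·dim W_Λ + |Λ| ≤ 2N²`); consequently
`κ(ℓ) ≤ N² − ℓ/2` for every `ℓ ≥ 1`. -/
theorem grid_diffNullSpace_dim_upper_bound (N : ℕ) :
    (∀ Λ : Finset (Sym2 (Fin N × Fin N)),
      (Λ : Set (Sym2 (Fin N × Fin N))) ⊆ (gridGraph N).edgeSet → Λ.Nonempty →
      2 * Module.finrank ℝ ↥(diffNullSpace Λ) + Λ.card ≤ 2 * N ^ 2)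
    ∧
    (∀ ℓ : ℕ, 1 ≤ ℓ → ∀ Λ : Finset (Sym2 (Fin N × Fin N)),
      (Λ : Set (Sym2 (Fin N × Fin N))) ⊆ (gridGraph N).edgeSet → ℓ ≤ Λ.card →
      2 * Module.finrank ℝ ↥(diffNullSpace Λ) + ℓ ≤ 2 * N ^ 2) := by
  have key (Λ : Finset (Sym2 (Fin N × Fin N)))
      (hΛ : (Λ : Set (Sym2 (Fin N × Fin N))) ⊆ (gridGraph N).edgeSet) :
      2 * finrank ℝ (diffNullSpace Λ) + #Λ ≤ 2 * N ^ 2 := by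
    have := mul_finrank_diffNullSpace_add_card_le
      (fun u v huv => gridHeight_ne_of_adj (hΛ huv)) (card_lowerNeighbors_gridHeight_le_two hΛ)
    simpa [sq] using this
  refine ⟨fun Λ hΛ _ => key Λ hΛ, fun ℓ _ Λ hΛ hℓ => ?_⟩
  have := key Λ hΛ
  omega
end

section
/- Consider the N×N grid graph with vertex set V = {1,…,N}² and edge set E of horizontally and vertically adjacent pairs. For every integer ℓ with 5 ≤ ℓ and √(ℓ/2) + 2 ≤ N, there exists Λ ⊆ E with |Λ| = ℓ such that the subspace W_Λ = {x ∈ ℝ^V : x(u) = x(v) for every {u,v} ∈ Λ} satisfies dim W_Λ ≥ N² − ℓ/2 − √(ℓ/2) − 1. Consequently, κ(ℓ) := max_{|Λ| ≥ ℓ} dim W_Λ ≥ N² − ℓ/2 − √(ℓ/2) − 1. -/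
/-!
If every edge of `Λ` has both endpoints in a nonempty vertex set `S`, then every function
that is constant on `S` lies in `W_Λ`, so `dim W_Λ ≥ |V| - |S| + 1`. It therefore suffices to
find few grid vertices spanning many grid edges. Fill the first `k = ⌊√(ℓ/2)⌋ + 1` columns of
the grid row by row: a prefix of `n` cells meeting `r` rows and `c ≤ k` columns spans at least
`2n - r - c` edges. A suitable prefix spanning `ℓ` edges has `2n ≤ ℓ + 2k + 2` and at most
`k + 1 ≤ √(ℓ/2) + 2 ≤ N` rows, so it fits into the grid and gives the bound.
-/

open Finset

theorem card_add_one_le_finrank_diffNullSpace_add_card {V : Type*} [Fintype V] [DecidableEq V]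
    {Λ : Finset (Sym2 V)} {S : Finset V} (hS : S.Nonempty) (hΛ : Λ ⊆ S.sym2) :
    Fintype.card V + 1 ≤ Module.finrank ℝ (diffNullSpace Λ) + #S := by
  -- `φ` parametrises the functions that are constant on `S`
  let φ : ({v // v ∉ S} → ℝ) × ℝ →ₗ[ℝ] V → ℝ :=
    { toFun p v := if h : v ∈ S then p.2 else p.1 ⟨v, h⟩
      map_add' p q := by ext v; by_cases h : v ∈ S <;> simp [h]
      map_smul' c p := by ext v; by_cases h : v ∈ S <;> simp [h] }
  have hφ_le : LinearMap.range φ ≤ diffNullSpace Λ := by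
    rintro _ ⟨p, rfl⟩ u v huv
    obtain ⟨hu, hv⟩ := mk_mem_sym2_iff.1 (hΛ huv)
    simp [φ, hu, hv]
  have hφ_inj : Function.Injective φ := by
    intro p q hpq
    obtain ⟨s, hs⟩ := hS
    refine Prod.ext (funext fun v => ?_) ?_
    · simpa [φ, v.2] using congrFun hpq v
    · simpa [φ, hs] using congrFun hpq s
  have hrange := Submodule.finrank_mono hφ_le
  rw [LinearMap.finrank_range_of_inj hφ_inj, Module.finrank_prod,
    Module.finrank_fintype_fun_eq_card, Module.finrank_self, Fintype.card_subtype_compl,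
    Fintype.card_coe] at hrange
  have := S.card_le_univ
  omega

theorem SimpleGraph.card_edgeFinset_inter_sym2_insert {V : Type*} [Fintype V] [DecidableEq V]
    (G : SimpleGraph V) [DecidableRel G.Adj] {S : Finset V} {v : V} (hv : v ∉ S) :
    #(G.edgeFinset ∩ (insert v S).sym2) =
      #(G.edgeFinset ∩ S.sym2) + #({w ∈ S | G.Adj v w}) := by
  have hsplit : G.edgeFinset ∩ (insert v S).sym2 =
      (G.edgeFinset ∩ S.sym2) ∪ {w ∈ S | G.Adj v w}.image (fun w => s(v, w)) := by
    ext e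
    induction e using Sym2.ind with
    | h x y =>
      simp only [mem_inter, SimpleGraph.mem_edgeFinset, SimpleGraph.mem_edgeSet,
        mk_mem_sym2_iff, mem_insert, mem_union, mem_image, mem_filter, Sym2.eq_iff]
      constructor
      · rintro ⟨hxy, rfl | hx, rfl | hy⟩
        · exact (G.irrefl hxy).elim
        · exact Or.inr ⟨y, ⟨hy, hxy⟩, Or.inl ⟨rfl, rfl⟩⟩
        · exact Or.inr ⟨x, ⟨hx, hxy.symm⟩, Or.inr ⟨rfl, rfl⟩⟩
        · exact Or.inl ⟨hxy, hx, hy⟩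
      · rintro (⟨hxy, hx, hy⟩ | ⟨w, ⟨hw, hvw⟩, ⟨rfl, rfl⟩ | ⟨rfl, rfl⟩⟩)
        · exact ⟨hxy, Or.inr hx, Or.inr hy⟩
        · exact ⟨hvw, Or.inl rfl, Or.inr hw⟩
        · exact ⟨hvw.symm, Or.inr hw, Or.inl rfl⟩
  rw [hsplit, card_union_of_disjoint, card_image_of_injective _ fun _ _ => Sym2.congr_right.1]
  rw [Finset.disjoint_left]
  intro e he he'
  obtain ⟨w, -, rfl⟩ := mem_image.1 he'
  exact hv (mem_sym2_iff.1 (mem_inter.1 he).2 v (Sym2.mem_mk_left v w))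

instance (N : ℕ) : DecidableRel (gridGraph N).Adj :=
  fun _ _ => decidable_of_iff' _ (SimpleGraph.fromRel_adj _ _ _)

namespace gridGraph

variable {N : ℕ}

theorem adj_of_snd_add_one {u v : Fin N × Fin N} (h₁ : u.1 = v.1) (h₂ : (u.2 : ℕ) + 1 = v.2) :
    (gridGraph N).Adj v u := by
  refine SimpleGraph.fromRel_adj _ _ _ |>.2 ⟨fun h => ?_, Or.inr (Or.inl ⟨h₁, h₂⟩)⟩
  subst h; omega

theorem adj_of_fst_add_one {u v : Fin N × Fin N} (h₁ : (u.1 : ℕ) + 1 = v.1) (h₂ : u.2 = v.2) :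
    (gridGraph N).Adj v u := by
  refine SimpleGraph.fromRel_adj _ _ _ |>.2 ⟨fun h => ?_, Or.inr (Or.inr ⟨h₂, h₁⟩)⟩
  subst h; omega

end gridGraph

/-- The first `a * k + j` cells of the first `k` columns of the grid in row-major order
(when `j ≤ k ≤ N` and `a < N`), the first coordinate being the row. -/
def rowMajorPrefix (N k a j : ℕ) : Finset (Fin N × Fin N) :=
  {v | (v.1 : ℕ) < a ∧ (v.2 : ℕ) < k ∨ (v.1 : ℕ) = a ∧ (v.2 : ℕ) < j}

section rowMajorPrefix

variable {N k a j : ℕ}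

theorem rowMajorPrefix_succ_zero : rowMajorPrefix N k (a + 1) 0 = rowMajorPrefix N k a k := by
  ext v; simp only [rowMajorPrefix, mem_filter_univ]; omega

theorem rowMajorPrefix_succ (ha : a < N) (hj : j < N) :
    rowMajorPrefix N k a (j + 1) = insert (⟨a, ha⟩, ⟨j, hj⟩) (rowMajorPrefix N k a j) := by
  ext v; simp only [rowMajorPrefix, mem_filter_univ, mem_insert, Prod.ext_iff, Fin.ext_iff]; omega

theorem mk_notMem_rowMajorPrefix (ha : a < N) (hj : j < N) :
    (⟨⟨a, ha⟩, ⟨j, hj⟩⟩ : Fin N × Fin N) ∉ rowMajorPrefix N k a j := by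
  simp [rowMajorPrefix]

/-- The `if`s count the cells above and to the left of `(a, j)`, which come earlier in
row-major order. -/
theorem le_card_filter_adj_rowMajorPrefix (ha : a < N) (hjk : j < k) (hj : j < N) :
    (if a = 0 then 0 else 1) + (if j = 0 then 0 else 1) ≤
      #{w ∈ rowMajorPrefix N k a j | (gridGraph N).Adj (⟨a, ha⟩, ⟨j, hj⟩) w} := by
  set B := {w ∈ rowMajorPrefix N k a j | (gridGraph N).Adj (⟨a, ha⟩, ⟨j, hj⟩) w}
  have up (ha0 : a ≠ 0) : (⟨a - 1, by omega⟩, ⟨j, hj⟩) ∈ B := by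
    refine mem_filter.2 ⟨by simp [rowMajorPrefix]; omega, ?_⟩
    exact gridGraph.adj_of_fst_add_one (by simp; omega) rfl
  have left (hj0 : j ≠ 0) : (⟨a, ha⟩, ⟨j - 1, by omega⟩) ∈ B := by
    refine mem_filter.2 ⟨by simp [rowMajorPrefix]; omega, ?_⟩
    exact gridGraph.adj_of_snd_add_one rfl (by simp; omega)
  by_cases ha0 : a = 0 <;> by_cases hj0 : j = 0 <;> simp only [ha0, hj0, if_true, if_false]
  · exact Nat.zero_le _
  · exact card_pos.2 ⟨_, left hj0⟩
  · exact card_pos.2 ⟨_, up ha0⟩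
  · refine (card_pair ?_).symm.le.trans
      (card_le_card (insert_subset (up ha0) (singleton_subset_iff.2 (left hj0))))
    simp [Prod.ext_iff]; omega

/-- A prefix of `n` cells meeting `r` rows and `c` columns spans at least `2 n - r - c` grid
edges: each cell is joined to its left neighbour unless it starts a row, and to its upper
neighbour unless it lies in the first row. -/
theorem rowMajorPrefix_card_and_edges (hk : k ≤ N) (ha : a < N) (hj : j ≤ k) :
    #(rowMajorPrefix N k a j) = a * k + j ∧
      2 * (a * k + j) ≤ #((gridGraph N).edgeFinset ∩ (rowMajorPrefix N k a j).sym2) +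
        (if j = 0 then a else a + 1) + (if a = 0 then j else k) := by
  have step : ∀ {a j}, a < N → j < k →
      #(rowMajorPrefix N k a j) = a * k + j ∧
        2 * (a * k + j) ≤ #((gridGraph N).edgeFinset ∩ (rowMajorPrefix N k a j).sym2) +
          (if j = 0 then a else a + 1) + (if a = 0 then j else k) →
      #(rowMajorPrefix N k a (j + 1)) = a * k + (j + 1) ∧
        2 * (a * k + (j + 1)) ≤
          #((gridGraph N).edgeFinset ∩ (rowMajorPrefix N k a (j + 1)).sym2) +
          (if j + 1 = 0 then a else a + 1) + (if a = 0 then j + 1 else k) := by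
    intro a j ha hjk ⟨hcard, hedges⟩
    have hjN : j < N := by omega
    have hnew := mk_notMem_rowMajorPrefix (k := k) ha hjN
    rw [rowMajorPrefix_succ ha hjN, card_insert_of_notMem hnew,
      SimpleGraph.card_edgeFinset_inter_sym2_insert _ hnew,
      if_neg j.succ_ne_zero]
    have hback := le_card_filter_adj_rowMajorPrefix ha hjk hjN
    refine ⟨by omega, ?_⟩
    split_ifs at hedges hback ⊢ <;> omega
  induction a generalizing j with
  | zero =>
    induction j with
    | zero => simp [rowMajorPrefix]
    | succ j ih => exact step ha (by omega) (ih (by omega))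
  | succ a ih =>
    induction j with
    | zero =>
      obtain ⟨hcard, hedges⟩ := ih (by omega) le_rfl
      rw [rowMajorPrefix_succ_zero, hcard, if_pos rfl, if_neg a.succ_ne_zero]
      have : (a + 1) * k = a * k + k := by ring
      refine ⟨by omega, ?_⟩
      split_ifs at hedges <;> omega
    | succ j ihj => exact step ha (by omega) (ihj (by omega))

end rowMajorPrefix

/-- `a` full rows and `j` further cells of a strip of `K + 1` columns: enough cells to span
`ℓ` edges, but not many more. -/
theorem exists_prefix_shape {ℓ K : ℕ} (hℓ : ℓ < 2 * (K + 1) ^ 2) :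
    ∃ a j, a ≤ K + 1 ∧ 1 ≤ j ∧ j ≤ K + 1 ∧ ℓ + K + a + 2 ≤ 2 * (a * (K + 1) + j) ∧
      2 * (a * (K + 1) + j) ≤ ℓ + K + a + 3 := by
  set a := (ℓ + K) / (2 * K + 1)
  have ha_le : a * (2 * K + 1) ≤ ℓ + K := Nat.div_mul_le_self _ _
  have ha_gt : ℓ + K < a * (2 * K + 1) + (2 * K + 1) := Nat.lt_div_mul_add (by omega)
  have ha : a < K + 2 := (Nat.div_lt_iff_lt_mul (by omega)).2 (by nlinarith)
  refine ⟨a, (ℓ + K + 3 - a * (2 * K + 1)) / 2, by omega, ?_⟩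
  have h1 : a * (K + 1) = a * K + a := by ring
  have h2 : a * (2 * K + 1) = 2 * (a * K) + a := by ring
  omega

theorem grid_diffNullSpace_dim_lower_bound_general
    (N ℓ : ℕ) (hN : Real.sqrt ((ℓ : ℝ) / 2) + 2 ≤ (N : ℝ)) :
    ∃ Λ : Finset (Sym2 (Fin N × Fin N)),
      (Λ : Set (Sym2 (Fin N × Fin N))) ⊆ (gridGraph N).edgeSet ∧ Λ.card = ℓ ∧
      (N : ℝ) ^ 2 - (ℓ : ℝ) / 2 - Real.sqrt ((ℓ : ℝ) / 2) - 1 ≤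
        (Module.finrank ℝ ↥(diffNullSpace Λ) : ℝ) := by
  set K := Nat.sqrt (ℓ / 2)
  have hK : (K : ℝ) ≤ √((ℓ : ℝ) / 2) :=
    Real.nat_sqrt_le_real_sqrt.trans (Real.sqrt_le_sqrt Nat.cast_div_le)
  have hKN : K + 2 ≤ N := by exact_mod_cast (by linarith : (K : ℝ) + 2 ≤ N)
  have hℓK : ℓ < 2 * (K + 1) ^ 2 := by
    nlinarith [Nat.lt_succ_sqrt (ℓ / 2), Nat.div_add_mod ℓ 2, Nat.mod_lt ℓ two_pos]
  obtain ⟨a, j, ha, hj₁, hjK, hℓ_le, hcells_le⟩ := exists_prefix_shape hℓK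
  obtain ⟨hcard, hedges⟩ :=
    rowMajorPrefix_card_and_edges (N := N) (k := K + 1) (a := a) (by omega) (by omega) hjK
  set S := rowMajorPrefix N (K + 1) a j
  have hℓE : ℓ ≤ #((gridGraph N).edgeFinset ∩ S.sym2) := by split_ifs at hedges <;> omega
  obtain ⟨Λ, hΛS, rfl⟩ := exists_subset_card_eq hℓE
  have hdim := card_add_one_le_finrank_diffNullSpace_add_card (card_pos.1 (by omega : 0 < #S))
    (hΛS.trans inter_subset_right)
  refine ⟨Λ, fun e he => SimpleGraph.mem_edgeFinset.1 (mem_inter.1 (hΛS he)).1, rfl, ?_⟩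
  rw [Fintype.card_prod, Fintype.card_fin] at hdim
  have hdimℝ : (N : ℝ) * N + 1 ≤ Module.finrank ℝ (diffNullSpace Λ) + #S := by
    exact_mod_cast hdim
  have hcellsℝ : 2 * (#S : ℝ) ≤ #Λ + 2 * K + 4 := by
    exact_mod_cast (by omega : 2 * #S ≤ #Λ + 2 * K + 4)
  nlinarith

/-- for every integer `ℓ` with `5 ≤ ℓ` and `√(ℓ/2) + 2 ≤ N`, there is a
set `Λ` of `ℓ` edges of the N×N grid graph with
`dim W_Λ ≥ N² − ℓ/2 − √(ℓ/2) − 1`; consequently `κ(ℓ)` satisfies the same lower bound. -/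
theorem grid_diffNullSpace_dim_lower_bound
    (N ℓ : ℕ) (h5 : 5 ≤ ℓ) (hN : Real.sqrt ((ℓ : ℝ) / 2) + 2 ≤ (N : ℝ)) :
    ∃ Λ : Finset (Sym2 (Fin N × Fin N)),
      (Λ : Set (Sym2 (Fin N × Fin N))) ⊆ (gridGraph N).edgeSet ∧ Λ.card = ℓ ∧
      (N : ℝ) ^ 2 - (ℓ : ℝ) / 2 - Real.sqrt ((ℓ : ℝ) / 2) - 1 ≤
        (Module.finrank ℝ ↥(diffNullSpace Λ) : ℝ) :=
  grid_diffNullSpace_dim_lower_bound_general N ℓ hN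
end

section
/- Consider the N×N grid graph with vertex set V = {1,…,N}² and edge set E of horizontally and vertically adjacent pairs. For every integer ℓ with 1 ≤ ℓ ≤ |E|, the minimum of |V(Λ)| − J(Λ) over all Λ ⊆ E with |Λ| ≥ ℓ is attained at some Λ with |Λ| = ℓ whose subgraph (V(Λ), Λ) is connected, i.e., J(Λ) = 1. Here V(Λ) is the set of vertices incident to at least one edge of Λ and J(Λ) is the number of connected components of the subgraph (V(Λ), Λ). -/
open Finset

/-- `V(Λ)`: the set of vertices incident to at least one edge of `Λ`. -/
def coveredVerts {V : Type*} [Fintype V] [DecidableEq V] (Λ : Finset (Sym2 V)) :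
    Finset V :=
  Finset.univ.filter fun v => ∃ e ∈ Λ, v ∈ e

/-- `J(Λ)`: the number of connected components of the subgraph `(V(Λ), Λ)`, i.e. the
number of connected components of the graph on `V` with edge set `Λ` that meet `V(Λ)`. -/
noncomputable def numComponents {V : Type*} [Fintype V] [DecidableEq V]
    (Λ : Finset (Sym2 V)) : ℕ :=
  Nat.card {c : (SimpleGraph.fromEdgeSet (Λ : Set (Sym2 V))).ConnectedComponent //
    ∃ v ∈ coveredVerts Λ,
      (SimpleGraph.fromEdgeSet (Λ : Set (Sym2 V))).connectedComponentMk v = c}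

/-!
Write `W n = 2n - ⌈2√n⌉`. By Harary–Harborth, `n` grid vertices span at most `W n` edges: every
row and every column they meet loses one edge, and meeting `r` rows and `c` columns with
`rc ≥ n` forces `r + c ≥ 2√n`. As `W (a + 1) + W (b + 1) ≤ W (a + b + 1)`, summing over the
components gives `|Λ| ≤ W (|V(Λ)| - J(Λ) + 1)` for every edge set `Λ`. Conversely the first `n`
points of the `Nat.pair` enumeration form a connected quasi-square spanning `W n` edges. For the
least `n` with `ℓ ≤ W n`, an edge set between those of the first `n - 1` and the first `n` points
therefore has `ℓ` edges, is connected and covers at most `n` vertices, whereas every `Λ` with at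
least `ℓ` edges has `|V(Λ)| - J(Λ) ≥ n - 1`.
-/

namespace GridEdges

lemma exists_four_mul_le_sq (n : ℕ) : ∃ t, 4 * n ≤ t * t :=
  ⟨2 * n, by cases n <;> nlinarith⟩

/-- `⌈2√n⌉`, as the least `t` with `4n ≤ t²`. -/
def ceilTwoSqrt (n : ℕ) : ℕ := Nat.find (exists_four_mul_le_sq n)

lemma four_mul_le_ceilTwoSqrt_sq (n : ℕ) : 4 * n ≤ ceilTwoSqrt n * ceilTwoSqrt n :=
  Nat.find_spec (exists_four_mul_le_sq n)

lemma ceilTwoSqrt_le {n s : ℕ} (h : 4 * n ≤ s * s) : ceilTwoSqrt n ≤ s :=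
  Nat.find_min' (exists_four_mul_le_sq n) h

lemma lt_ceilTwoSqrt {n s : ℕ} (h : s * s < 4 * n) : s < ceilTwoSqrt n := by
  by_contra! hs
  have := four_mul_le_ceilTwoSqrt_sq n
  have := Nat.mul_self_le_mul_self hs
  omega

lemma ceilTwoSqrt_le_two_mul (n : ℕ) : ceilTwoSqrt n ≤ 2 * n :=
  ceilTwoSqrt_le (by cases n <;> nlinarith)

lemma ceilTwoSqrt_mul_self (k : ℕ) : ceilTwoSqrt (k * k) = 2 * k := by
  refine le_antisymm (ceilTwoSqrt_le (le_of_eq (by ring))) ?_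
  rcases k with _ | k
  · simp
  · have := lt_ceilTwoSqrt (n := (k + 1) * (k + 1)) (s := 2 * k + 1) (by nlinarith)
    omega

/-- The Harary–Harborth bound on the number of grid edges spanned by `n` vertices. -/
def gridEdgeBound (n : ℕ) : ℕ := 2 * n - ceilTwoSqrt n

lemma gridEdgeBound_zero : gridEdgeBound 0 = 0 := by
  simp [gridEdgeBound]

lemma gridEdgeBound_one : gridEdgeBound 1 = 0 := by
  have := lt_ceilTwoSqrt (n := 1) (s := 1) (by norm_num)
  have := ceilTwoSqrt_le_two_mul 1
  unfold gridEdgeBound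
  omega

lemma gridEdgeBound_mul_self (k : ℕ) : gridEdgeBound (k * k) = 2 * k * (k - 1) := by
  unfold gridEdgeBound
  rw [ceilTwoSqrt_mul_self]
  rcases k with _ | k
  · rfl
  · rw [Nat.add_sub_cancel]
    exact Nat.sub_eq_of_eq_add (by ring)

lemma gridEdgeBound_add_le (a b : ℕ) :
    gridEdgeBound (a + 1) + gridEdgeBound (b + 1) ≤ gridEdgeBound (a + b + 1) := by
  have ha := four_mul_le_ceilTwoSqrt_sq (a + 1)
  have hb := four_mul_le_ceilTwoSqrt_sq (b + 1)
  have ha2 := lt_ceilTwoSqrt (n := a + 1) (s := 1) (by omega)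
  have hb2 := lt_ceilTwoSqrt (n := b + 1) (s := 1) (by omega)
  obtain ⟨s, hs⟩ : ∃ s, ceilTwoSqrt (a + 1) = s + 2 := ⟨_, (Nat.sub_add_cancel ha2).symm⟩
  obtain ⟨u, hu⟩ : ∃ u, ceilTwoSqrt (b + 1) = u + 2 := ⟨_, (Nat.sub_add_cancel hb2).symm⟩
  rw [hs] at ha
  rw [hu] at hb
  have hab : ceilTwoSqrt (a + b + 1) ≤ s + u + 2 := ceilTwoSqrt_le (by nlinarith)
  have := ceilTwoSqrt_le_two_mul (a + 1)
  have := ceilTwoSqrt_le_two_mul (b + 1)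
  unfold gridEdgeBound
  omega

lemma gridEdgeBound_succ_le_add_two (n : ℕ) : gridEdgeBound (n + 1) ≤ gridEdgeBound n + 2 := by
  have := ceilTwoSqrt_le_two_mul n
  have : ceilTwoSqrt n ≤ ceilTwoSqrt (n + 1) :=
    ceilTwoSqrt_le (le_trans (by omega) (four_mul_le_ceilTwoSqrt_sq (n + 1)))
  unfold gridEdgeBound
  omega

lemma gridEdgeBound_succ_le_add_one {n s : ℕ} (h₁ : 4 * n ≤ s * s) (h₂ : s * s < 4 * (n + 1)) :
    gridEdgeBound (n + 1) ≤ gridEdgeBound n + 1 := by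
  have := ceilTwoSqrt_le h₁
  have := lt_ceilTwoSqrt h₂
  have := ceilTwoSqrt_le_two_mul n
  unfold gridEdgeBound
  omega

lemma sum_le_of_superadditive {ι : Type*} {f : ℕ → ℕ}
    (hf : ∀ a b, f (a + 1) + f (b + 1) ≤ f (a + b + 1)) (s : Finset ι) (g : ι → ℕ) :
    ∑ i ∈ s, f (g i + 1) ≤ f (∑ i ∈ s, g i + 1) := by
  classical
  induction s using Finset.induction_on with
  | empty => simp
  | insert i s hi ih =>
    rw [Finset.sum_insert hi, Finset.sum_insert hi, add_assoc]
    exact (Nat.add_le_add_left ih _).trans (hf _ _)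

section Reachability

variable {V : Type*}

lemma reachable_of_mk_mem {Λ : Finset (Sym2 V)} {u v : V} (h : s(u, v) ∈ Λ) :
    (SimpleGraph.fromEdgeSet (Λ : Set (Sym2 V))).Reachable u v := by
  by_cases huv : u = v
  · exact huv ▸ SimpleGraph.Reachable.refl u
  · exact ((SimpleGraph.fromEdgeSet_adj _).2 ⟨h, huv⟩).reachable

lemma reachable_of_mem_of_mem {Λ : Finset (Sym2 V)} {e : Sym2 V} (he : e ∈ Λ) {u v : V}
    (hu : u ∈ e) (hv : v ∈ e) : (SimpleGraph.fromEdgeSet (Λ : Set (Sym2 V))).Reachable u v := by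
  obtain ⟨w, rfl⟩ := Sym2.mem_iff_exists.1 hu
  rcases Sym2.mem_iff.1 hv with rfl | rfl
  · rfl
  · exact reachable_of_mk_mem he

def PreconnectedOn (Λ : Finset (Sym2 V)) (S : Finset V) : Prop :=
  ∀ u ∈ S, ∀ v ∈ S, (SimpleGraph.fromEdgeSet (Λ : Set (Sym2 V))).Reachable u v

lemma preconnectedOn_singleton (Λ : Finset (Sym2 V)) (p : V) : PreconnectedOn Λ {p} := by
  intro u hu v hv
  rw [Finset.mem_singleton.1 hu, Finset.mem_singleton.1 hv]

lemma PreconnectedOn.mono {Λ Λ' : Finset (Sym2 V)} {S S' : Finset V} (h : PreconnectedOn Λ S)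
    (hΛ : Λ ⊆ Λ') (hS : S' ⊆ S) : PreconnectedOn Λ' S' := fun u hu v hv =>
  (h u (hS hu) v (hS hv)).mono (SimpleGraph.fromEdgeSet_mono (by exact_mod_cast hΛ))

lemma PreconnectedOn.insert_of_mk_mem [DecidableEq V] {Λ : Finset (Sym2 V)} {S : Finset V}
    {p q : V} (h : PreconnectedOn Λ S) (hq : q ∈ S) (hpq : s(p, q) ∈ Λ) :
    PreconnectedOn Λ (insert p S) := by
  have hp : ∀ u ∈ insert p S, (SimpleGraph.fromEdgeSet (Λ : Set (Sym2 V))).Reachable u q := by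
    intro u hu
    rcases Finset.mem_insert.1 hu with rfl | hu
    · exact reachable_of_mk_mem hpq
    · exact h u hu q hq
  exact fun u hu v hv => (hp u hu).trans (hp v hv).symm

end Reachability

section InducedEdges

variable {V : Type*} [Fintype V] [DecidableEq V]

open Classical in
noncomputable def inducedEdges (G : SimpleGraph V) (S : Finset V) : Finset (Sym2 V) :=
  Finset.univ.filter fun e => e ∈ G.edgeSet ∧ ∀ v ∈ e, v ∈ S

lemma mem_inducedEdges {G : SimpleGraph V} {S : Finset V} {e : Sym2 V} :
    e ∈ inducedEdges G S ↔ e ∈ G.edgeSet ∧ ∀ v ∈ e, v ∈ S := by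
  simp [inducedEdges]

lemma mk_mem_inducedEdges {G : SimpleGraph V} {S : Finset V} {u v : V} (h : G.Adj u v)
    (hu : u ∈ S) (hv : v ∈ S) : s(u, v) ∈ inducedEdges G S :=
  mem_inducedEdges.2 ⟨h, fun w hw => by rcases Sym2.mem_iff.1 hw with rfl | rfl <;> assumption⟩

lemma inducedEdges_mono (G : SimpleGraph V) {S T : Finset V} (h : S ⊆ T) :
    inducedEdges G S ⊆ inducedEdges G T := fun _ he =>
  mem_inducedEdges.2 ⟨(mem_inducedEdges.1 he).1, fun v hv => h ((mem_inducedEdges.1 he).2 v hv)⟩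

lemma coe_inducedEdges_subset_edgeSet (G : SimpleGraph V) (S : Finset V) :
    (inducedEdges G S : Set (Sym2 V)) ⊆ G.edgeSet := fun _ he =>
  (mem_inducedEdges.1 he).1

lemma mem_coveredVerts {Λ : Finset (Sym2 V)} {v : V} :
    v ∈ coveredVerts Λ ↔ ∃ e ∈ Λ, v ∈ e := by
  simp [coveredVerts]

lemma coveredVerts_subset {G : SimpleGraph V} {S : Finset V} {Λ : Finset (Sym2 V)}
    (h : Λ ⊆ inducedEdges G S) : coveredVerts Λ ⊆ S := fun v hv => by
  obtain ⟨e, he, hve⟩ := mem_coveredVerts.1 hv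
  exact (mem_inducedEdges.1 (h he)).2 v hve

lemma exists_eq_mk_of_mem_inducedEdges_insert {G : SimpleGraph V} {S : Finset V} {p : V}
    {e : Sym2 V} (he : e ∈ inducedEdges G (insert p S)) (hne : e ∉ inducedEdges G S) :
    ∃ q ∈ S, e = s(p, q) := by
  obtain ⟨hG, hS⟩ := mem_inducedEdges.1 he
  obtain ⟨v, hve, hvS⟩ : ∃ v ∈ e, v ∉ S := by
    by_contra! h
    exact hne (mem_inducedEdges.2 ⟨hG, h⟩)
  have hvp : v = p := (Finset.mem_insert.1 (hS v hve)).resolve_right hvS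
  subst hvp
  obtain ⟨q, rfl⟩ := Sym2.mem_iff_exists.1 hve
  refine ⟨q, (Finset.mem_insert.1 (hS q (Sym2.mem_mk_right _ _))).resolve_left ?_, rfl⟩
  exact (G.ne_of_adj hG).symm

lemma card_inducedEdges_add_le_card_inducedEdges_insert (G : SimpleGraph V) {S T : Finset V}
    {p : V} (hp : p ∉ S) (hT : T ⊆ S) (hadj : ∀ q ∈ T, G.Adj p q) :
    (inducedEdges G S).card + T.card ≤ (inducedEdges G (insert p S)).card := by
  have hinj : Set.InjOn (fun q => s(p, q)) (T : Set V) := fun _ _ _ _ h => Sym2.congr_right.1 h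
  have hdisj : Disjoint (inducedEdges G S) (T.image fun q => s(p, q)) := by
    refine Finset.disjoint_left.2 fun e he he' => ?_
    obtain ⟨q, -, rfl⟩ := Finset.mem_image.1 he'
    exact hp ((mem_inducedEdges.1 he).2 p (Sym2.mem_mk_left _ _))
  rw [← Finset.card_image_of_injOn hinj, ← Finset.card_union_of_disjoint hdisj]
  refine Finset.card_le_card (Finset.union_subset (inducedEdges_mono G (Finset.subset_insert _ _))
    fun e he => ?_)
  obtain ⟨q, hq, rfl⟩ := Finset.mem_image.1 he
  exact mk_mem_inducedEdges (hadj q hq) (Finset.mem_insert_self _ _)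
    (Finset.mem_insert_of_mem (hT hq))

lemma numComponents_eq_card_image (Λ : Finset (Sym2 V))
    [DecidableEq (SimpleGraph.fromEdgeSet (Λ : Set (Sym2 V))).ConnectedComponent] :
    numComponents Λ = ((coveredVerts Λ).image
      (SimpleGraph.fromEdgeSet (Λ : Set (Sym2 V))).connectedComponentMk).card := by
  rw [numComponents, ← Nat.card_eq_finsetCard]
  exact Nat.card_congr (Equiv.subtypeEquivRight fun c => by simp)

lemma numComponents_le_card_coveredVerts (Λ : Finset (Sym2 V)) :
    numComponents Λ ≤ (coveredVerts Λ).card := by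
  classical
  exact (numComponents_eq_card_image Λ).trans_le Finset.card_image_le

lemma numComponents_eq_one {Λ : Finset (Sym2 V)} (h : PreconnectedOn Λ (coveredVerts Λ))
    (hne : (coveredVerts Λ).Nonempty) : numComponents Λ = 1 := by
  classical
  rw [numComponents_eq_card_image, Finset.card_eq_one]
  obtain ⟨v, hv⟩ := hne
  refine ⟨_, Finset.eq_singleton_iff_unique_mem.2 ⟨Finset.mem_image_of_mem _ hv, ?_⟩⟩
  intro c hc
  obtain ⟨u, hu, rfl⟩ := Finset.mem_image.1 hc
  exact SimpleGraph.ConnectedComponent.sound (h u hu v hv)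

theorem card_le_of_superadditive (G : SimpleGraph V) {f : ℕ → ℕ}
    (hf : ∀ a b, f (a + 1) + f (b + 1) ≤ f (a + b + 1))
    (hG : ∀ S : Finset V, (inducedEdges G S).card ≤ f S.card)
    {Λ : Finset (Sym2 V)} (hΛ : (Λ : Set (Sym2 V)) ⊆ G.edgeSet) :
    Λ.card ≤ f ((coveredVerts Λ).card - numComponents Λ + 1) := by
  classical
  set comp := (SimpleGraph.fromEdgeSet (Λ : Set (Sym2 V))).connectedComponentMk
  set C := (coveredVerts Λ).image comp
  let verts c := (coveredVerts Λ).filter (comp · = c)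
  let edges c := Λ.filter (comp ·.out.1 = c)
  have hcov : ∀ e ∈ Λ, ∀ v ∈ e, v ∈ coveredVerts Λ := fun e he v hv =>
    mem_coveredVerts.2 ⟨e, he, hv⟩
  have hedges : Λ.card = ∑ c ∈ C, (edges c).card := Finset.card_eq_sum_card_fiberwise
    fun e he => Finset.mem_image_of_mem _ (hcov e he _ (Sym2.out_fst_mem e))
  have hverts : (coveredVerts Λ).card = ∑ c ∈ C, (verts c).card :=
    Finset.card_eq_sum_card_fiberwise fun v hv => Finset.mem_image_of_mem _ hv
  have hpos : ∀ c ∈ C, 1 ≤ (verts c).card := by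
    intro c hc
    obtain ⟨v, hv, rfl⟩ := Finset.mem_image.1 hc
    exact Finset.card_pos.2 ⟨v, Finset.mem_filter.2 ⟨hv, rfl⟩⟩
  have hcomp : ∀ c ∈ C, (edges c).card ≤ f ((verts c).card - 1 + 1) := by
    intro c hc
    rw [Nat.sub_add_cancel (hpos c hc)]
    refine (Finset.card_le_card fun e he => ?_).trans (hG (verts c))
    obtain ⟨heΛ, rfl⟩ := Finset.mem_filter.1 he
    refine mem_inducedEdges.2 ⟨hΛ heΛ, fun v hv => Finset.mem_filter.2 ⟨hcov e heΛ v hv, ?_⟩⟩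
    exact SimpleGraph.ConnectedComponent.sound
      (reachable_of_mem_of_mem heΛ hv (Sym2.out_fst_mem e))
  have hsum : ∑ c ∈ C, ((verts c).card - 1) = (coveredVerts Λ).card - numComponents Λ := by
    rw [Finset.sum_tsub_distrib _ hpos, ← hverts, numComponents_eq_card_image, Finset.sum_const,
      smul_eq_mul, mul_one]
  calc Λ.card = ∑ c ∈ C, (edges c).card := hedges
    _ ≤ ∑ c ∈ C, f ((verts c).card - 1 + 1) := Finset.sum_le_sum hcomp
    _ ≤ f (∑ c ∈ C, ((verts c).card - 1) + 1) := sum_le_of_superadditive hf _ _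
    _ = f ((coveredVerts Λ).card - numComponents Λ + 1) := by rw [hsum]

/-- `Λ` has to contain an edge from `p` to `S`, which links `p` to the rest. -/
theorem exists_numComponents_eq_one (G : SimpleGraph V) {S : Finset V} {p : V} {ℓ : ℕ}
    (hS : PreconnectedOn (inducedEdges G S) S) (hlt : (inducedEdges G S).card < ℓ)
    (hle : ℓ ≤ (inducedEdges G (insert p S)).card) :
    ∃ Λ ⊆ inducedEdges G (insert p S), Λ.card = ℓ ∧ numComponents Λ = 1 := by
  obtain ⟨Λ, hSΛ, hΛ, hcard⟩ := Finset.exists_subsuperset_card_eq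
    (inducedEdges_mono G (Finset.subset_insert p S)) hlt.le hle
  obtain ⟨e, heΛ, heS⟩ := Finset.exists_of_ssubset
    (hSΛ.ssubset_of_ne (by rintro rfl; omega))
  obtain ⟨q, hq, rfl⟩ := exists_eq_mk_of_mem_inducedEdges_insert (hΛ heΛ) heS
  refine ⟨Λ, hΛ, hcard, numComponents_eq_one ?_
    ⟨p, mem_coveredVerts.2 ⟨_, heΛ, Sym2.mem_mk_left _ _⟩⟩⟩
  exact ((hS.mono hSΛ subset_rfl).insert_of_mk_mem hq heΛ).mono subset_rfl (coveredVerts_subset hΛ)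

end InducedEdges

/-- `π` names the line of a vertex and `σ` its position on it; the last vertex of `S` on each
line starts no edge of `F`. -/
lemma card_add_card_image_le {V α : Type*} [DecidableEq V] [DecidableEq α] (π : V → α)
    (σ : V → ℕ) (hinj : ∀ u v, π u = π v → σ u = σ v → u = v) (S : Finset V)
    (F : Finset (Sym2 V))
    (hF : ∀ e ∈ F, ∃ a ∈ S, ∃ b ∈ S, e = s(a, b) ∧ π a = π b ∧ σ a + 1 = σ b) :
    F.card + (S.image π).card ≤ S.card := by
  classical
  let starts := S.filter fun a => ∃ b ∈ S, π a = π b ∧ σ a + 1 = σ b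
  have hF_le : F.card ≤ starts.card := by
    refine Finset.card_le_card_of_forall_subsingleton
      (fun e a => ∃ b, e = s(a, b) ∧ π a = π b ∧ σ a + 1 = σ b) (fun e he => ?_) ?_
    · obtain ⟨a, ha, b, hb, rfl, hab⟩ := hF e he
      exact ⟨a, Finset.mem_filter.2 ⟨ha, b, hb, hab⟩, b, rfl, hab⟩
    · rintro a - e ⟨-, b, rfl, hπ, hσ⟩ e' ⟨-, b', rfl, hπ', hσ'⟩
      rw [hinj b b' (hπ.symm.trans hπ') (by omega)]
  have hlines_le : (S.image π).card ≤ (S \ starts).card := by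
    refine Finset.card_le_card_of_surjOn π fun c hc => ?_
    obtain ⟨v, hv, rfl⟩ := Finset.mem_image.1 (Finset.mem_coe.1 hc)
    obtain ⟨w, hw, hmax⟩ := Finset.exists_max_image (S.filter (π · = π v)) σ
      ⟨v, Finset.mem_filter.2 ⟨hv, rfl⟩⟩
    obtain ⟨hwS, hwv⟩ := Finset.mem_filter.1 hw
    refine ⟨w, Finset.mem_sdiff.2 ⟨hwS, fun hws => ?_⟩, hwv⟩
    obtain ⟨b, hb, hπ, hσ⟩ := (Finset.mem_filter.1 hws).2
    have := hmax b (Finset.mem_filter.2 ⟨hb, hπ.symm.trans hwv⟩)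
    omega
  have : (S \ starts).card + starts.card = S.card :=
    Finset.card_sdiff_add_card_eq_card (Finset.filter_subset _ S)
  omega

section Grid

variable {N : ℕ}

lemma exists_eq_mk_of_mem_edgeSet_gridGraph {e : Sym2 (Fin N × Fin N)}
    (he : e ∈ (gridGraph N).edgeSet) : ∃ a b : Fin N × Fin N, e = s(a, b) ∧
      ((a.2 = b.2 ∧ (a.1 : ℕ) + 1 = b.1) ∨ (a.1 = b.1 ∧ (a.2 : ℕ) + 1 = b.2)) := by
  induction e with
  | _ u v =>
    have h : (gridGraph N).Adj u v := he
    rw [gridGraph, SimpleGraph.fromRel_adj] at h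
    obtain ⟨-, (h | h) | (h | h)⟩ := h
    · exact ⟨u, v, rfl, Or.inr h⟩
    · exact ⟨u, v, rfl, Or.inl h⟩
    · exact ⟨v, u, Sym2.eq_swap, Or.inr h⟩
    · exact ⟨v, u, Sym2.eq_swap, Or.inl h⟩

lemma gridGraph_adj_of_fst_succ {p q : Fin N × Fin N} (h₁ : (q.1 : ℕ) + 1 = p.1)
    (h₂ : q.2 = p.2) : (gridGraph N).Adj p q :=
  (SimpleGraph.fromRel_adj _ p q).2
    ⟨fun h => by rw [h] at h₁; omega, Or.inr (Or.inr ⟨h₂, h₁⟩)⟩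

lemma gridGraph_adj_of_snd_succ {p q : Fin N × Fin N} (h₁ : q.1 = p.1)
    (h₂ : (q.2 : ℕ) + 1 = p.2) : (gridGraph N).Adj p q :=
  (SimpleGraph.fromRel_adj _ p q).2
    ⟨fun h => by rw [h] at h₂; omega, Or.inr (Or.inl ⟨h₁, h₂⟩)⟩

lemma card_le_card_image_fst_mul_card_image_snd (S : Finset (Fin N × Fin N)) :
    S.card ≤ (S.image Prod.fst).card * (S.image Prod.snd).card := by
  rw [← Finset.card_product]
  exact Finset.card_le_card fun v hv =>
    Finset.mem_product.2 ⟨Finset.mem_image_of_mem _ hv, Finset.mem_image_of_mem _ hv⟩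

theorem card_inducedEdges_gridGraph_le (S : Finset (Fin N × Fin N)) :
    (inducedEdges (gridGraph N) S).card ≤ gridEdgeBound S.card := by
  classical
  set E := inducedEdges (gridGraph N) S
  have hS : ∀ e ∈ E, ∀ v ∈ e, v ∈ S := fun e he => (mem_inducedEdges.1 he).2
  let horizontal (e : Sym2 (Fin N × Fin N)) : Prop :=
    ∃ a b : Fin N × Fin N, e = s(a, b) ∧ a.2 = b.2 ∧ (a.1 : ℕ) + 1 = b.1
  have hH := card_add_card_image_le Prod.snd (fun v : Fin N × Fin N => (v.1 : ℕ))
    (fun u v h₂ h₁ => Prod.ext (Fin.ext h₁) h₂) S (E.filter horizontal) <| by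
      intro e he
      obtain ⟨heE, a, b, rfl, hab⟩ := Finset.mem_filter.1 he
      exact ⟨a, hS _ heE a (Sym2.mem_mk_left a b), b, hS _ heE b (Sym2.mem_mk_right a b), rfl, hab⟩
  have hV := card_add_card_image_le Prod.fst (fun v : Fin N × Fin N => (v.2 : ℕ))
    (fun u v h₁ h₂ => Prod.ext h₁ (Fin.ext h₂)) S (E.filter (¬horizontal ·)) <| by
      intro e he
      obtain ⟨heE, hnot⟩ := Finset.mem_filter.1 he
      obtain ⟨a, b, rfl, hab | hab⟩ :=
        exists_eq_mk_of_mem_edgeSet_gridGraph (mem_inducedEdges.1 heE).1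
      · exact absurd ⟨a, b, rfl, hab⟩ hnot
      · exact ⟨a, hS _ heE a (Sym2.mem_mk_left a b), b, hS _ heE b (Sym2.mem_mk_right a b),
          rfl, hab⟩
  have hsplit := Finset.card_filter_add_card_filter_not (s := E) horizontal
  have hceil : ceilTwoSqrt S.card ≤ (S.image Prod.fst).card + (S.image Prod.snd).card :=
    ceilTwoSqrt_le <| by
      nlinarith [card_le_card_image_fst_mul_card_image_snd S,
        sq_nonneg ((S.image Prod.fst).card - (S.image Prod.snd).card : ℤ)]
  unfold gridEdgeBound
  omega

lemma lt_of_pair_lt_mul_self {a b : ℕ} (h : Nat.pair a b < N * N) : a < N ∧ b < N := by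
  have := Nat.max_sq_add_min_le_pair a b
  have hmax : max a b < N := Nat.mul_self_lt_mul_self_iff.1 (by rw [← sq]; omega)
  exact ⟨lt_of_le_of_lt (le_max_left a b) hmax, lt_of_le_of_lt (le_max_right a b) hmax⟩

/-- `Nat.pair` enumerates the square `[0, k)²`, then the points `(x, k)` with `x < k`, then the
points `(k, y)` with `y ≤ k`. -/
def quasiSquare (N n : ℕ) : Finset (Fin N × Fin N) :=
  Finset.univ.filter fun p => Nat.pair p.1 p.2 < n

lemma mem_quasiSquare {n : ℕ} {p : Fin N × Fin N} :
    p ∈ quasiSquare N n ↔ Nat.pair p.1 p.2 < n := by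
  simp [quasiSquare]

lemma quasiSquare_zero : quasiSquare N 0 = ∅ := by
  ext p
  simp [mem_quasiSquare]

lemma exists_quasiSquare_succ {n : ℕ} (h : n < N * N) : ∃ p : Fin N × Fin N,
    Nat.pair p.1 p.2 = n ∧ quasiSquare N (n + 1) = insert p (quasiSquare N n) := by
  have hlt := lt_of_pair_lt_mul_self (a := n.unpair.1) (b := n.unpair.2)
    (by rwa [Nat.pair_unpair])
  refine ⟨(⟨_, hlt.1⟩, ⟨_, hlt.2⟩), Nat.pair_unpair n, ?_⟩
  ext q
  rw [Finset.mem_insert, mem_quasiSquare, mem_quasiSquare, Nat.lt_succ_iff_lt_or_eq, or_comm]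
  refine or_congr_left ⟨fun hq => ?_, fun hq => hq ▸ Nat.pair_unpair n⟩
  have := Nat.pair_eq_pair.1 (hq.trans (Nat.pair_unpair n).symm)
  exact Prod.ext (Fin.ext this.1) (Fin.ext this.2)

lemma card_quasiSquare {n : ℕ} (h : n ≤ N * N) : (quasiSquare N n).card = n := by
  induction n with
  | zero => rw [quasiSquare_zero, Finset.card_empty]
  | succ n ih =>
    obtain ⟨p, hp, hins⟩ := exists_quasiSquare_succ (N := N) h
    rw [hins, Finset.card_insert_of_notMem (by simp [mem_quasiSquare, hp]), ih (by omega)]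

lemma exists_adj_of_fst_pos {p : Fin N × Fin N} (h : 0 < (p.1 : ℕ)) :
    ∃ q ∈ quasiSquare N (Nat.pair p.1 p.2), (gridGraph N).Adj p q ∧ q.2 = p.2 := by
  refine ⟨(⟨p.1 - 1, by omega⟩, p.2), mem_quasiSquare.2 (Nat.pair_lt_pair_left _ (by simp; omega)),
    gridGraph_adj_of_fst_succ (by simp; omega) rfl, rfl⟩

lemma exists_adj_of_snd_pos {p : Fin N × Fin N} (h : 0 < (p.2 : ℕ)) :
    ∃ q ∈ quasiSquare N (Nat.pair p.1 p.2), (gridGraph N).Adj p q ∧ q.1 = p.1 := by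
  refine ⟨(p.1, ⟨p.2 - 1, by omega⟩), mem_quasiSquare.2 (Nat.pair_lt_pair_right _ (by simp; omega)),
    gridGraph_adj_of_snd_succ rfl (by simp; omega), rfl⟩

/-- The neighbours of `p` among the earlier points pay for the increase of `gridEdgeBound` at
`p`: it grows by at most `2`, and only by `1` where `p` opens a new row or column. -/
lemma exists_adj_subset_quasiSquare (p : Fin N × Fin N) :
    ∃ T ⊆ quasiSquare N (Nat.pair p.1 p.2), (∀ q ∈ T, (gridGraph N).Adj p q) ∧
      gridEdgeBound (Nat.pair p.1 p.2 + 1) ≤ gridEdgeBound (Nat.pair p.1 p.2) + T.card := by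
  obtain ⟨x, hx⟩ : ∃ x, (p.1 : ℕ) = x := ⟨_, rfl⟩
  obtain ⟨y, hy⟩ : ∃ y, (p.2 : ℕ) = y := ⟨_, rfl⟩
  rcases Nat.eq_zero_or_pos x with rfl | hx0 <;> rcases Nat.eq_zero_or_pos y with rfl | hy0
  · refine ⟨∅, Finset.empty_subset _, by simp, ?_⟩
    simp [hx, hy, Nat.pair, gridEdgeBound_one]
  · obtain ⟨q, hq, hpq, -⟩ := exists_adj_of_snd_pos (p := p) (by omega)
    refine ⟨{q}, Finset.singleton_subset_iff.2 hq, by simpa using hpq, ?_⟩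
    have hpair : Nat.pair p.1 p.2 = y * y := by simp [Nat.pair, hx, hy, hy0]
    rw [hpair, Finset.card_singleton]
    exact gridEdgeBound_succ_le_add_one (s := 2 * y) (by nlinarith) (by nlinarith)
  · obtain ⟨q, hq, hpq, -⟩ := exists_adj_of_fst_pos (p := p) (by omega)
    refine ⟨{q}, Finset.singleton_subset_iff.2 hq, by simpa using hpq, ?_⟩
    have hpair : Nat.pair p.1 p.2 = x * x + x := by simp [Nat.pair, hx, hy]
    rw [hpair, Finset.card_singleton]
    exact gridEdgeBound_succ_le_add_one (s := 2 * x + 1) (by nlinarith) (by nlinarith)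
  · obtain ⟨q, hq, hpq, hq2⟩ := exists_adj_of_fst_pos (p := p) (by omega)
    obtain ⟨r, hr, hpr, hr1⟩ := exists_adj_of_snd_pos (p := p) (by omega)
    have hqr : q ≠ r := fun h => (gridGraph N).ne_of_adj hpq (Prod.ext (h ▸ hr1).symm hq2.symm)
    refine ⟨{q, r}, Finset.insert_subset hq (Finset.singleton_subset_iff.2 hr), ?_, ?_⟩
    · simpa [hpq] using hpr
    · rw [Finset.card_pair hqr]
      exact gridEdgeBound_succ_le_add_two _

lemma gridEdgeBound_le_card_inducedEdges_quasiSquare {n : ℕ} (h : n ≤ N * N) :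
    gridEdgeBound n ≤ (inducedEdges (gridGraph N) (quasiSquare N n)).card := by
  induction n with
  | zero => simp [gridEdgeBound_zero]
  | succ n ih =>
    obtain ⟨p, rfl, hins⟩ := exists_quasiSquare_succ (N := N) h
    obtain ⟨T, hT, hadj, hbound⟩ := exists_adj_subset_quasiSquare p
    rw [hins]
    refine hbound.trans ((Nat.add_le_add_right (ih (by omega)) _).trans ?_)
    exact card_inducedEdges_add_le_card_inducedEdges_insert _ (by simp [mem_quasiSquare]) hT hadj

lemma preconnectedOn_quasiSquare {n : ℕ} (h : n ≤ N * N) :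
    PreconnectedOn (inducedEdges (gridGraph N) (quasiSquare N n)) (quasiSquare N n) := by
  induction n with
  | zero => simp [quasiSquare_zero, PreconnectedOn]
  | succ n ih =>
    obtain ⟨p, rfl, hins⟩ := exists_quasiSquare_succ (N := N) h
    rw [hins]
    rcases Nat.eq_zero_or_pos (Nat.pair p.1 p.2) with h0 | hpos
    · rw [h0, quasiSquare_zero]
      exact preconnectedOn_singleton _ p
    · obtain ⟨q, hq, hpq⟩ : ∃ q ∈ quasiSquare N (Nat.pair p.1 p.2), (gridGraph N).Adj p q := by
        rcases Nat.eq_zero_or_pos (p.1 : ℕ) with hx | hx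
        · obtain ⟨q, hq, hpq, -⟩ := exists_adj_of_snd_pos (p := p) <| Nat.pos_of_ne_zero
            fun hy => by simp [Nat.pair, hx, hy] at hpos
          exact ⟨q, hq, hpq⟩
        · obtain ⟨q, hq, hpq, -⟩ := exists_adj_of_fst_pos hx
          exact ⟨q, hq, hpq⟩
      refine ((ih (by omega)).mono (inducedEdges_mono _ (Finset.subset_insert _ _))
        subset_rfl).insert_of_mk_mem hq ?_
      exact mk_mem_inducedEdges hpq (Finset.mem_insert_self _ _) (Finset.mem_insert_of_mem hq)

theorem exists_numComponents_eq_one_card_coveredVerts_le {ℓ m : ℕ} (hm : m < N * N)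
    (hlt : gridEdgeBound m < ℓ) (hle : ℓ ≤ gridEdgeBound (m + 1)) :
    ∃ Λ₀ : Finset (Sym2 (Fin N × Fin N)),
      (Λ₀ : Set (Sym2 (Fin N × Fin N))) ⊆ (gridGraph N).edgeSet ∧
      Λ₀.card = ℓ ∧ numComponents Λ₀ = 1 ∧ (coveredVerts Λ₀).card ≤ m + 1 := by
  obtain ⟨p, -, hins⟩ := exists_quasiSquare_succ hm
  obtain ⟨Λ₀, hΛ₀, hcard, hJ⟩ := exists_numComponents_eq_one (gridGraph N) (p := p)
    (preconnectedOn_quasiSquare hm.le)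
    ((card_inducedEdges_gridGraph_le _).trans_lt (by rwa [card_quasiSquare hm.le]))
    (by rw [← hins]; exact hle.trans (gridEdgeBound_le_card_inducedEdges_quasiSquare hm))
  refine ⟨Λ₀, (Finset.coe_subset.2 hΛ₀).trans (coe_inducedEdges_subset_edgeSet _ _), hcard, hJ, ?_⟩
  calc (coveredVerts Λ₀).card ≤ (insert p (quasiSquare N m)).card :=
        Finset.card_le_card (coveredVerts_subset hΛ₀)
    _ = m + 1 := by rw [← hins, card_quasiSquare hm]

end Grid

end GridEdges

/-- for `1 ≤ ℓ ≤ |E| = 2N(N−1)`, the minimum of `|V(Λ)| − J(Λ)` over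
all edge sets `Λ` of the grid graph with `|Λ| ≥ ℓ` is attained at some connected `Λ`
with exactly `ℓ` edges (i.e. `J(Λ) = 1`). -/
theorem grid_min_attained_connected
    (N ℓ : ℕ) (h1 : 1 ≤ ℓ) (hℓ : ℓ ≤ 2 * N * (N - 1)) :
    ∃ Λ₀ : Finset (Sym2 (Fin N × Fin N)),
      (Λ₀ : Set (Sym2 (Fin N × Fin N))) ⊆ (gridGraph N).edgeSet ∧
      Λ₀.card = ℓ ∧ numComponents Λ₀ = 1 ∧
      ∀ Λ : Finset (Sym2 (Fin N × Fin N)),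
        (Λ : Set (Sym2 (Fin N × Fin N))) ⊆ (gridGraph N).edgeSet → ℓ ≤ Λ.card →
        ((coveredVerts Λ₀).card : ℤ) - numComponents Λ₀ ≤
          ((coveredVerts Λ).card : ℤ) - numComponents Λ := by
  have hNN : ℓ ≤ GridEdges.gridEdgeBound (N * N) := by rwa [GridEdges.gridEdgeBound_mul_self]
  have hex : ∃ n, ℓ ≤ GridEdges.gridEdgeBound n := ⟨N * N, hNN⟩
  obtain ⟨m, hm⟩ : ∃ m, Nat.find hex = m + 1 := Nat.exists_eq_succ_of_ne_zero fun h => by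
    have := Nat.find_spec hex
    rw [h, GridEdges.gridEdgeBound_zero] at this
    omega
  obtain ⟨Λ₀, hsub, hcard, hJ, hV⟩ := GridEdges.exists_numComponents_eq_one_card_coveredVerts_le
    (hm ▸ Nat.find_min' hex hNN) (not_le.1 (Nat.find_min hex (by omega))) (hm ▸ Nat.find_spec hex)
  refine ⟨Λ₀, hsub, hcard, hJ, fun Λ hΛ hℓΛ => ?_⟩
  have hbound := GridEdges.card_le_of_superadditive _ GridEdges.gridEdgeBound_add_le
    GridEdges.card_inducedEdges_gridGraph_le hΛ
  have hmin : m + 1 ≤ (coveredVerts Λ).card - numComponents Λ + 1 :=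
    hm ▸ Nat.find_min' hex (hℓΛ.trans hbound)
  have hJΛ := GridEdges.numComponents_le_card_coveredVerts Λ
  rw [hJ]
  omega
end
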